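/- arXiv:2108.04786 — 11 statements merged into one kernel-verified Lean document; each statement's English description precedes it below -/
import Mathlib

section
/- For any natural number r and real x with |x| < 1/(2r), (1+x)^r ≤ 1 + r·x + 2·(r·x)^2. -/
lemma exp_quad_bound (t : ℝ) (ht : |t| ≤ 1) :
    Real.exp t ≤ 1 + t + 2 * t ^ 2 := by
  have h := Real.exp_bound ht (n := 2) (by norm_num)
  have h2 : |Real.exp t - (1 + t)| ≤ t ^ 2 * (3 / (2 * 2)) := by
    simpa [Finset.sum_range_succ] using h
  have := abs_le.mp h2
  nlinarith [sq_abs t, sq_nonneg t]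

/-- Reverse Bernoulli inequality. -/
theorem reverse_bernoulli (r : ℕ) (x : ℝ) (hx : |x| < 1 / (2 * r)) :
    (1 + x) ^ r ≤ 1 + r * x + 2 * (r * x) ^ 2 := by
  rcases Nat.eq_zero_or_pos r with hr | hr
  · subst hr
    simp at hx
    exact absurd hx (not_lt.mpr (abs_nonneg x))
  · have hr1 : (1 : ℝ) ≤ r := by exact_mod_cast hr
    have hrx : |(r : ℝ) * x| < 1 / 2 := by
      rw [abs_mul, abs_of_nonneg (by positivity : (0:ℝ) ≤ (r:ℝ))]
      calc (r : ℝ) * |x| < r * (1 / (2 * r)) := by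
            apply mul_lt_mul_of_pos_left hx (by positivity)
        _ = 1 / 2 := by field_simp
    have h1 : (1 + x) ^ r ≤ Real.exp x ^ r := by
      apply pow_le_pow_left₀ _ (by linarith [Real.add_one_le_exp x])
      have : |x| ≤ |(r:ℝ) * x| := by
        rw [abs_mul, abs_of_nonneg (by positivity : (0:ℝ) ≤ (r:ℝ))]
        nlinarith [abs_nonneg x]
      nlinarith [abs_nonneg x, neg_abs_le x]
    have h2 : Real.exp x ^ r = Real.exp (r * x) := by
      rw [← Real.exp_nat_mul]
    calc (1 + x) ^ r ≤ Real.exp (r * x) := by rw [← h2]; exact h1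
      _ ≤ 1 + r * x + 2 * (r * x) ^ 2 :=
        exp_quad_bound _ (by linarith [hrx])
end

section
/- For any integer k ≥ 1 and real q with 1 - 1/(4k) ≤ q ≤ 1, the total variation distance between the truncated geometric distribution ν_{k,q} and the uniform distribution ν_{k,1} on {1,...,k} satisfies ||ν_{k,q} - ν_{k,1}||_TV ≤ 3k(1-q). -/
/-- Total variation distance between the truncated geometric distribution `ν_{k,q}`
and the uniform distribution `ν_{k,1}` on `{1,…,k}`. -/
theorem truncGeom_tv_dist (k : ℕ) (hk : 1 ≤ k) (q : ℝ)
    (hq1 : 1 - 1 / (4 * k) ≤ q) (hq2 : q ≤ 1) :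
    (1 / 2) * ∑ j ∈ Finset.Icc 1 k,
        |(if q = 1 then (1 : ℝ) / k else (1 - q) * q ^ (j - 1) / (1 - q ^ k)) - 1 / k|
      ≤ 3 * k * (1 - q) := by
  have hk1 : (1:ℝ) ≤ (k:ℝ) := by exact_mod_cast hk
  have hkpos : (0:ℝ) < k := by linarith
  by_cases hq : q = 1
  · subst hq; simp
  · simp only [if_neg hq]
    have hqlt : q < 1 := lt_of_le_of_ne hq2 hq
    have hε : (0:ℝ) < 1 - q := by linarith
    have h4k : (0:ℝ) < 4 * k := by linarith
    have hεk : (4:ℝ) * k * (1 - q) ≤ 1 := by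
      have : 1 - q ≤ 1 / (4 * k) := by linarith
      calc (4:ℝ) * k * (1 - q) ≤ 4 * k * (1 / (4 * k)) := by
            exact mul_le_mul_of_nonneg_left this (by linarith)
        _ = 1 := by field_simp
    have hq0 : (0:ℝ) ≤ q := by nlinarith
    -- Bernoulli: q^i ≥ 1 - i*(1-q)
    have hpow : ∀ i : ℕ, (i:ℝ) ≤ k → 1 - (k:ℝ) * (1 - q) ≤ q ^ i := by
      intro i hi
      have hb : 1 + (i:ℝ) * (q - 1) ≤ (1 + (q - 1)) ^ i :=
        one_add_mul_le_pow (by linarith) i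
      have h2 : (i:ℝ) * (1 - q) ≤ (k:ℝ) * (1 - q) :=
        mul_le_mul_of_nonneg_right hi (le_of_lt hε)
      have : (1 + (q - 1)) = q := by ring
      rw [this] at hb
      nlinarith
    have hpow1 : ∀ i : ℕ, q ^ i ≤ 1 := fun i => pow_le_one₀ hq0 hq2
    set S : ℝ := ∑ i ∈ Finset.range k, q ^ i with hSdef
    have hS : (1 - q) * S = 1 - q ^ k := by
      have h := geom_sum_mul q k
      rw [hSdef]; nlinarith [h]
    have hSub : S ≤ (k:ℝ) := by
      calc S ≤ ∑ i ∈ Finset.range k, (1:ℝ) :=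
            Finset.sum_le_sum (fun i _ => hpow1 i)
        _ = (k:ℝ) := by simp
    have hSlb' : (k:ℝ) * (1 - (k:ℝ) * (1 - q)) ≤ S := by
      calc (k:ℝ) * (1 - (k:ℝ) * (1 - q)) = ∑ i ∈ Finset.range k, (1 - (k:ℝ) * (1 - q)) := by
            simp [mul_comm]; ring
        _ ≤ S := Finset.sum_le_sum (fun i hi => hpow i (by
            have : i < k := Finset.mem_range.mp hi
            exact_mod_cast le_of_lt this))
    have hSlb : (3:ℝ)/4 * k ≤ S := by nlinarith
    have hSpos : (0:ℝ) < S := by nlinarith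
    -- per-term bound
    have hterm : ∀ j ∈ Finset.Icc 1 k,
        |(1 - q) * q ^ (j - 1) / (1 - q ^ k) - 1 / k| ≤ 4/3 * (1 - q) := by
      intro j hj
      obtain ⟨hj1, hj2⟩ := Finset.mem_Icc.mp hj
      have hjk : ((j - 1 : ℕ) : ℝ) ≤ (k:ℝ) := by
        have : j - 1 ≤ k := le_trans (Nat.sub_le j 1) hj2
        exact_mod_cast this
      have hpj1 : q ^ (j - 1) ≤ 1 := hpow1 _
      have hpj2 : 1 - (k:ℝ) * (1 - q) ≤ q ^ (j - 1) := hpow _ hjk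
      have hrw : (1 - q) * q ^ (j - 1) / (1 - q ^ k) = q ^ (j - 1) / S := by
        rw [← hS, mul_div_mul_left _ _ (ne_of_gt hε)]
      rw [hrw]
      have key : |(k:ℝ) * q ^ (j - 1) - S| ≤ (k:ℝ)^2 * (1 - q) := by
        rw [abs_le]
        constructor
        · nlinarith [mul_le_mul_of_nonneg_left hpj2 (le_of_lt hkpos)]
        · nlinarith [mul_le_mul_of_nonneg_left hpj1 (le_of_lt hkpos)]
      have hrw2 : q ^ (j - 1) / S - 1 / k = ((k:ℝ) * q ^ (j - 1) - S) / ((k:ℝ) * S) := by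
        field_simp
      rw [hrw2, abs_div, abs_of_pos (mul_pos hkpos hSpos)]
      calc |(k:ℝ) * q ^ (j - 1) - S| / ((k:ℝ) * S)
          ≤ ((k:ℝ)^2 * (1 - q)) / ((k:ℝ) * ((3:ℝ)/4 * k)) := by
            gcongr
        _ = 4/3 * (1 - q) := by field_simp
    have hsum : ∑ j ∈ Finset.Icc 1 k,
        |(1 - q) * q ^ (j - 1) / (1 - q ^ k) - 1 / k| ≤ (k:ℝ) * (4/3 * (1 - q)) := by
      calc ∑ j ∈ Finset.Icc 1 k, |(1 - q) * q ^ (j - 1) / (1 - q ^ k) - 1 / k|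
          ≤ ∑ j ∈ Finset.Icc 1 k, (4/3 * (1 - q)) := Finset.sum_le_sum hterm
        _ = (k:ℝ) * (4/3 * (1 - q)) := by
            rw [Finset.sum_const, Nat.card_Icc]
            simp [nsmul_eq_mul]
    nlinarith [hsum]
end

section
/- Fix 0 < q < 1 and integers 1 ≤ k ≤ n. Let v_{k+1},...,v_n be independent random variables with v_i ~ ν_{i,q} (the truncated geometric distribution on {1,...,i}). Then the probability that v_i ≤ i - k for all k < i ≤ n equals ∏_{i=1}^{k} (1-q^i)/(1-q^{n-k+i}). -/
open MeasureTheory ProbabilityTheory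

lemma flush_prod_id (q : ℝ) (hq0 : 0 < q) (hq1 : q < 1) (k n : ℕ) (hk : 1 ≤ k) (hkn : k ≤ n) :
    ∏ i ∈ Finset.Icc (k + 1) n, (1 - q ^ (i - k)) / (1 - q ^ i)
      = ∏ i ∈ Finset.Icc 1 k, (1 - q ^ i) / (1 - q ^ (n - k + i)) := by
  have hpos : ∀ m : ℕ, 1 ≤ m → 0 < 1 - q ^ m := by
    intro m hm
    have : q ^ m < 1 := pow_lt_one₀ hq0.le hq1 (by omega)
    linarith
  have hnum : ∏ i ∈ Finset.Icc (k + 1) n, (1 - q ^ (i - k))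
      = ∏ m ∈ Finset.Icc 1 (n - k), (1 - q ^ m) := by
    rw [show Finset.Icc (k + 1) n = Finset.map (addRightEmbedding k) (Finset.Icc 1 (n - k)) by
      rw [Finset.map_add_right_Icc]; congr 1 <;> omega]
    rw [Finset.prod_map]
    refine Finset.prod_congr rfl fun m hm => ?_
    simp only [addRightEmbedding_apply]
    congr 2
    omega
  have hden : ∏ i ∈ Finset.Icc 1 k, (1 - q ^ (n - k + i))
      = ∏ m ∈ Finset.Icc (n - k + 1) n, (1 - q ^ m) := by
    rw [show Finset.Icc (n - k + 1) n = Finset.map (addRightEmbedding (n - k)) (Finset.Icc 1 k) by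
      rw [Finset.map_add_right_Icc]; congr 1 <;> omega]
    rw [Finset.prod_map]
    refine Finset.prod_congr rfl fun m hm => ?_
    simp only [addRightEmbedding_apply]
    congr 2
    omega
  rw [Finset.prod_div_distrib, Finset.prod_div_distrib, hnum, hden]
  have h1 : ∏ i ∈ Finset.Icc (k + 1) n, (1 - q ^ i) ≠ 0 := by
    apply Finset.prod_ne_zero_iff.mpr
    intro i hi
    simp only [Finset.mem_Icc] at hi
    exact ne_of_gt (hpos i (by omega))
  have h2 : ∏ m ∈ Finset.Icc (n - k + 1) n, (1 - q ^ m) ≠ 0 := by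
    apply Finset.prod_ne_zero_iff.mpr
    intro i hi
    simp only [Finset.mem_Icc] at hi
    exact ne_of_gt (hpos i (by omega))
  rw [div_eq_div_iff h1 h2]
  have e1 : (∏ m ∈ Finset.Icc 1 (n - k), (1 - q ^ m)) *
      ∏ m ∈ Finset.Icc (n - k + 1) n, (1 - q ^ m) = ∏ m ∈ Finset.Icc 1 n, (1 - q ^ m) := by
    simp only [Finset.Icc_add_one_left_eq_Ioc]
    exact Finset.prod_Ioc_consecutive _ (m := 0) (n := n - k) (k := n) (by omega) (by omega)
  have e2 : (∏ m ∈ Finset.Icc 1 k, (1 - q ^ m)) *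
      ∏ m ∈ Finset.Icc (k + 1) n, (1 - q ^ m) = ∏ m ∈ Finset.Icc 1 n, (1 - q ^ m) := by
    simp only [Finset.Icc_add_one_left_eq_Ioc]
    exact Finset.prod_Ioc_consecutive _ (m := 0) (n := k) (k := n) (by omega) (by omega)
  rw [e1, ← e2]

/-- The probability of the flush event `F_k` in the q-Mallows process. -/
theorem flush_prob {Ω : Type*} [MeasurableSpace Ω] (μ : Measure Ω) [IsProbabilityMeasure μ]
    (q : ℝ) (hq0 : 0 < q) (hq1 : q < 1) (k n : ℕ) (hk : 1 ≤ k) (hkn : k ≤ n)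
    (v : ℕ → Ω → ℕ) (hmeas : ∀ i, Measurable (v i))
    (hindep : iIndepFun v μ)
    (hdist : ∀ i ∈ Finset.Icc (k + 1) n, ∀ j : ℕ,
      μ {ω | v i ω = j} =
        if 1 ≤ j ∧ j ≤ i then ENNReal.ofReal ((1 - q) * q ^ (j - 1) / (1 - q ^ i)) else 0) :
    μ {ω | ∀ i ∈ Finset.Icc (k + 1) n, v i ω ≤ i - k}
      = ENNReal.ofReal (∏ i ∈ Finset.Icc 1 k, (1 - q ^ i) / (1 - q ^ (n - k + i))) := by
  have hq1' : (0:ℝ) < 1 - q := by linarith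
  have hpos : ∀ m : ℕ, 1 ≤ m → 0 < 1 - q ^ m := by
    intro m hm
    have : q ^ m < 1 := pow_lt_one₀ hq0.le hq1 (by omega)
    linarith
  -- rewrite the event as an intersection
  have hset : {ω | ∀ i ∈ Finset.Icc (k + 1) n, v i ω ≤ i - k}
      = ⋂ i ∈ Finset.Icc (k + 1) n, {ω | v i ω ≤ i - k} := by
    ext ω; simp
  -- independence gives a product
  have hindep' : μ (⋂ i ∈ Finset.Icc (k + 1) n, {ω | v i ω ≤ i - k})
      = ∏ i ∈ Finset.Icc (k + 1) n, μ {ω | v i ω ≤ i - k} := by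
    refine hindep.meas_biInter fun i hi => ?_
    exact ⟨Set.Iic (i - k), measurableSet_Iic, rfl⟩
  -- compute each marginal probability
  have hsingle : ∀ i ∈ Finset.Icc (k + 1) n,
      μ {ω | v i ω ≤ i - k} = ENNReal.ofReal ((1 - q ^ (i - k)) / (1 - q ^ i)) := by
    intro i hi
    have hi' := hi
    simp only [Finset.mem_Icc] at hi'
    have hunion : {ω | v i ω ≤ i - k}
        = ⋃ j ∈ Finset.range (i - k + 1), {ω | v i ω = j} := by
      ext ω
      simp only [Set.mem_setOf_eq, Set.mem_iUnion, Finset.mem_range]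
      constructor
      · intro h; exact ⟨v i ω, by omega, rfl⟩
      · rintro ⟨j, hj, hj'⟩; omega
    rw [hunion, measure_biUnion_finset]
    · rw [Finset.sum_congr rfl (fun j _ => hdist i hi j)]
      have hconv : ∀ j ∈ Finset.range (i - k + 1),
          (if 1 ≤ j ∧ j ≤ i then ENNReal.ofReal ((1 - q) * q ^ (j - 1) / (1 - q ^ i)) else 0)
            = ENNReal.ofReal
                (if 1 ≤ j ∧ j ≤ i then (1 - q) * q ^ (j - 1) / (1 - q ^ i) else 0) := by
        intro j _
        split <;> simp
      rw [Finset.sum_congr rfl hconv, ← ENNReal.ofReal_sum_of_nonneg]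
      · congr 1
        have hsum : ∑ j ∈ Finset.range (i - k + 1),
            (if 1 ≤ j ∧ j ≤ i then (1 - q) * q ^ (j - 1) / (1 - q ^ i) else 0)
              = ∑ j ∈ Finset.range (i - k), (1 - q) * q ^ j / (1 - q ^ i) := by
          rw [Finset.sum_range_succ']
          simp only [show ¬(1 ≤ 0 ∧ 0 ≤ i) by omega, if_false, add_zero]
          refine Finset.sum_congr rfl fun j hj => ?_
          simp only [Finset.mem_range] at hj
          rw [if_pos (by omega)]
          norm_num
        rw [hsum, ← Finset.sum_div, ← Finset.mul_sum, geom_sum_eq (by linarith)]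
        have hq1ne : q - 1 ≠ 0 := by linarith
        have key : (1 - q) * ((q ^ (i - k) - 1) / (q - 1)) = 1 - q ^ (i - k) := by
          field_simp
          ring
        rw [key]
      · intro j _
        have hpi := hpos i (by omega)
        split
        · have hqj : (0:ℝ) ≤ q ^ (j-1) := by positivity
          positivity
        · exact le_refl 0
    · intro a ha b hb hab
      simp only [Function.onFun]
      exact Set.disjoint_left.mpr fun ω h1 h2 => hab (by simp_all)
    · intro j _
      exact hmeas i (measurableSet_singleton j)
  rw [hset, hindep', Finset.prod_congr rfl hsingle, ← ENNReal.ofReal_prod_of_nonneg,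
    flush_prod_id q hq0 hq1 k n hk hkn]
  intro i hi
  simp only [Finset.mem_Icc] at hi
  have h1 := hpos (i - k) (by omega)
  have h2 := hpos i (by omega)
  positivity
end

section
/- Fix 0 < q < 1 and integers 1 ≤ k ≤ n. Let v_{k+1},...,v_n be independent random variables with v_i ~ ν_{i,q}. Then P(v_i > k for all k < i ≤ n) = q^{k(n-k)} · P(v_i ≤ i-k for all k < i ≤ n). -/
open MeasureTheory ProbabilityTheory

/-- Measure of a preimage of a set of naturals as a tsum over point masses. -/
lemma meas_preimage_eq_tsum {Ω : Type*} [MeasurableSpace Ω] (μ : Measure Ω)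
    (f : Ω → ℕ) (hf : Measurable f) (S : Set ℕ) :
    μ (f ⁻¹' S) = ∑' j : ℕ, S.indicator (fun j => μ (f ⁻¹' {j})) j := by
  have h1 : f ⁻¹' S = ⋃ j : ℕ, f ⁻¹' ({j} ∩ S) := by
    ext ω; simp [eq_comm]
  rw [h1, measure_iUnion]
  · congr 1; ext j
    by_cases h : j ∈ S
    · simp [Set.indicator, h, Set.inter_eq_left.mpr (Set.singleton_subset_iff.mpr h)]
    · have : {j} ∩ S = (∅ : Set ℕ) := by
        ext x; simp; rintro rfl; exact h
      simp [Set.indicator, h, this]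
  · intro a b hab
    apply Set.disjoint_left.mpr
    intro ω ha hb
    exact hab (ha.1.symm.trans hb.1)
  · intro j; exact hf (by trivial)

/-- Geometric sum identity. -/
lemma geom_sum_Icc_shift (q : ℝ) (hq1 : q ≠ 1) (a b : ℕ) (hab : a ≤ b) :
    ∑ j ∈ Finset.Icc (a + 1) b, q ^ (j - 1) = (q ^ a - q ^ b) / (1 - q) := by
  have h1 : Finset.Icc (a + 1) b = Finset.Ico (a + 1) (b + 1) := by
    rw [Finset.Ico_add_one_right_eq_Icc]
  rw [h1, Finset.sum_Ico_eq_sum_range]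
  have h2 : ∑ j ∈ Finset.Ico a b, q ^ j = (q ^ b - q ^ a) / (q - 1) :=
    geom_sum_Ico hq1 hab
  rw [Finset.sum_Ico_eq_sum_range] at h2
  have h3 : b + 1 - (a + 1) = b - a := by omega
  rw [h3]
  have h4 : ∀ j ∈ Finset.range (b - a), q ^ (a + 1 + j - 1) = q ^ (a + j) := by
    intro j _; congr 1; omega
  rw [Finset.sum_congr rfl h4, h2]
  rw [div_eq_div_iff (by intro h; apply hq1; linarith [sub_eq_zero.mp h])
    (by intro h; apply hq1; linarith [sub_eq_zero.mp h])]
  ring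

/-- The probability of the reverse flush event equals `q^{k(n-k)}` times that of the flush event. -/
theorem reverse_flush_prob {Ω : Type*} [MeasurableSpace Ω] (μ : Measure Ω) [IsProbabilityMeasure μ]
    (q : ℝ) (hq0 : 0 < q) (hq1 : q < 1) (k n : ℕ) (hk : 1 ≤ k) (hkn : k ≤ n)
    (v : ℕ → Ω → ℕ) (hmeas : ∀ i, Measurable (v i))
    (hindep : iIndepFun v μ)
    (hdist : ∀ i ∈ Finset.Icc (k + 1) n, ∀ j : ℕ,
      μ {ω | v i ω = j} =
        if 1 ≤ j ∧ j ≤ i then ENNReal.ofReal ((1 - q) * q ^ (j - 1) / (1 - q ^ i)) else 0) :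
    μ {ω | ∀ i ∈ Finset.Icc (k + 1) n, k < v i ω}
      = ENNReal.ofReal (q ^ (k * (n - k)))
          * μ {ω | ∀ i ∈ Finset.Icc (k + 1) n, v i ω ≤ i - k} := by
  have hqne : q ≠ 1 := ne_of_lt hq1
  have hq1' : 1 - q > 0 := by linarith
  -- positivity of 1 - q^i for i in the range
  have hpos : ∀ i ∈ Finset.Icc (k + 1) n, (0:ℝ) < 1 - q ^ i := by
    intro i hi
    have : q ^ i < 1 := pow_lt_one₀ (le_of_lt hq0) hq1 (by
      simp [Finset.mem_Icc] at hi; omega)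
    linarith
  -- per-index probabilities
  have key1 : ∀ i ∈ Finset.Icc (k + 1) n,
      μ ((v i) ⁻¹' {j | k < j}) = ENNReal.ofReal ((q ^ k - q ^ i) / (1 - q ^ i)) := by
    intro i hi
    have hik : k + 1 ≤ i ∧ i ≤ n := Finset.mem_Icc.mp hi
    rw [meas_preimage_eq_tsum μ (v i) (hmeas i)]
    have hzero : ∀ j ∉ Finset.Icc (k + 1) i,
        Set.indicator {j | k < j} (fun j => μ ((v i) ⁻¹' {j})) j = 0 := by
      intro j hj
      simp only [Finset.mem_Icc, not_and, not_le] at hj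
      by_cases h : k < j
      · have hji : i < j := by omega
        rw [Set.indicator_of_mem (show j ∈ {j | k < j} from h)]
        have := hdist i hi j
        simp only [Set.preimage, Set.mem_singleton_iff]
        rw [this, if_neg (by omega)]
      · exact Set.indicator_of_notMem (show j ∉ {j | k < j} from h) _
    rw [tsum_eq_sum hzero]
    have hterm : ∀ j ∈ Finset.Icc (k + 1) i,
        Set.indicator {j | k < j} (fun j => μ ((v i) ⁻¹' {j})) j
          = ENNReal.ofReal ((1 - q) * q ^ (j - 1) / (1 - q ^ i)) := by
      intro j hj
      simp only [Finset.mem_Icc] at hj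
      rw [Set.indicator_of_mem (by simp; omega)]
      have := hdist i hi j
      simp only [Set.preimage, Set.mem_singleton_iff]
      rw [this, if_pos (by omega)]
    rw [Finset.sum_congr rfl hterm,
      ← ENNReal.ofReal_sum_of_nonneg (fun j _ => by
        have := hpos i hi; positivity)]
    congr 1
    rw [← Finset.sum_div, ← Finset.mul_sum,
      geom_sum_Icc_shift q hqne k i (by omega)]
    field_simp
  have key2 : ∀ i ∈ Finset.Icc (k + 1) n,
      μ ((v i) ⁻¹' {j | j ≤ i - k}) = ENNReal.ofReal ((1 - q ^ (i - k)) / (1 - q ^ i)) := by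
    intro i hi
    have hik : k + 1 ≤ i ∧ i ≤ n := Finset.mem_Icc.mp hi
    rw [meas_preimage_eq_tsum μ (v i) (hmeas i)]
    have hzero : ∀ j ∉ Finset.Icc 1 (i - k),
        Set.indicator {j | j ≤ i - k} (fun j => μ ((v i) ⁻¹' {j})) j = 0 := by
      intro j hj
      simp only [Finset.mem_Icc, not_and, not_le] at hj
      by_cases h : j ≤ i - k
      · have hj0 : j = 0 := by omega
        rw [Set.indicator_of_mem (show j ∈ {j | j ≤ i - k} from h)]
        have := hdist i hi j
        simp only [Set.preimage, Set.mem_singleton_iff]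
        rw [this, if_neg (by omega)]
      · exact Set.indicator_of_notMem (show j ∉ {j | j ≤ i - k} from h) _
    rw [tsum_eq_sum hzero]
    have hterm : ∀ j ∈ Finset.Icc 1 (i - k),
        Set.indicator {j | j ≤ i - k} (fun j => μ ((v i) ⁻¹' {j})) j
          = ENNReal.ofReal ((1 - q) * q ^ (j - 1) / (1 - q ^ i)) := by
      intro j hj
      simp only [Finset.mem_Icc] at hj
      rw [Set.indicator_of_mem (by simp; omega)]
      have := hdist i hi j
      simp only [Set.preimage, Set.mem_singleton_iff]
      rw [this, if_pos (by omega)]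
    rw [Finset.sum_congr rfl hterm,
      ← ENNReal.ofReal_sum_of_nonneg (fun j _ => by
        have := hpos i hi; positivity)]
    congr 1
    have h01 : Finset.Icc 1 (i - k) = Finset.Icc (0 + 1) (i - k) := by norm_num
    rw [← Finset.sum_div, ← Finset.mul_sum, h01,
      geom_sum_Icc_shift q hqne 0 (i - k) (by omega)]
    field_simp
  -- rewrite events as intersections
  have hev1 : {ω | ∀ i ∈ Finset.Icc (k + 1) n, k < v i ω}
      = ⋂ i ∈ Finset.Icc (k + 1) n, (v i) ⁻¹' {j | k < j} := by
    ext ω; simp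
  have hev2 : {ω | ∀ i ∈ Finset.Icc (k + 1) n, v i ω ≤ i - k}
      = ⋂ i ∈ Finset.Icc (k + 1) n, (v i) ⁻¹' {j | j ≤ i - k} := by
    ext ω; simp
  rw [hev1, hev2]
  rw [hindep.meas_biInter (fun i _ => ⟨{j | k < j}, trivial, rfl⟩),
    hindep.meas_biInter (fun i _ => ⟨{j | j ≤ i - k}, trivial, rfl⟩)]
  rw [Finset.prod_congr rfl key1, Finset.prod_congr rfl key2]
  -- combine per-index identities
  have hfactor : ∀ i ∈ Finset.Icc (k + 1) n,
      ENNReal.ofReal ((q ^ k - q ^ i) / (1 - q ^ i))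
        = ENNReal.ofReal (q ^ k) * ENNReal.ofReal ((1 - q ^ (i - k)) / (1 - q ^ i)) := by
    intro i hi
    have hik : k + 1 ≤ i ∧ i ≤ n := Finset.mem_Icc.mp hi
    rw [← ENNReal.ofReal_mul (by positivity)]
    congr 1
    have : q ^ k * q ^ (i - k) = q ^ i := by
      rw [← pow_add]; congr 1; omega
    rw [← mul_div_assoc]
    congr 1
    rw [mul_sub, mul_one, this]
  rw [Finset.prod_congr rfl hfactor, Finset.prod_mul_distrib, Finset.prod_const,
    Nat.card_Icc]
  have hc : n + 1 - (k + 1) = n - k := by omega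
  rw [hc, ← ENNReal.ofReal_pow (by positivity), ← pow_mul]
end

section
/- For any real 0 < q < 1, the sum S = ∑_{i=1}^∞ log(1-q^i) satisfies q·log(q)/(6(1-q)) ≤ S - π²/(6·log q) + log(1-q)/2 ≤ -(1-q)/(q·log q). -/
/-!
Expanding each `log (1 - qⁱ)` and summing the resulting geometric series in `i` turns
`∑ log (1 - qⁱ)` into the Lambert series `-∑ qⁿ / (n (1 - qⁿ))`. Together with
`π² / 6 = ∑ 1 / n²` and `-log (1 - q) = ∑ qⁿ / n`, the middle expression becomes
`∑ r(qⁿ) / n` with `r = remainderTerm`. The atanh-series bounds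
`2 (1 - x) / (1 + x) ≤ -log x ≤ (1 - x²) / (2 x)` give `0 ≤ r(x) ≤ -(1 - x) / log x - x`
on `(0, 1)`, so the sum is nonnegative (better than the stated lower bound) and at most
`(dilog q - π² / 6) / log q + log (1 - q)`. Euler's reflection formula for the dilogarithm
and `dilog (1 - q) ≤ (1 - q) / q` bound this by the right-hand side.
-/

open Real Filter Topology Set

lemma one_add_div_one_sub_eq_inv {x : ℝ} (hx0 : 0 < x) :
    (1 + (1 - x) / (1 + x)) / (1 - (1 - x) / (1 + x)) = x⁻¹ := by
  have : 1 + x ≠ 0 := by positivity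
  field_simp [hx0.ne']
  ring

lemma two_mul_one_sub_div_one_add_le_neg_log {x : ℝ} (hx0 : 0 < x) (hx1 : x ≤ 1) :
    2 * (1 - x) / (1 + x) ≤ -log x := by
  have h := sum_range_le_log_div (x := (1 - x) / (1 + x)) (by bound) (by bound) 1
  rw [Finset.sum_range_one, one_add_div_one_sub_eq_inv hx0, log_inv] at h
  norm_num at h
  rw [mul_div_assoc]
  linarith

lemma neg_log_le_one_sub_sq_div_two_mul {x : ℝ} (hx0 : 0 < x) (hx1 : x ≤ 1) :
    -log x ≤ (1 - x ^ 2) / (2 * x) := by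
  have h := log_div_le_sum_range_add (x := (1 - x) / (1 + x)) (by bound) (by bound) 1
  rw [Finset.sum_range_one, one_add_div_one_sub_eq_inv hx0, log_inv] at h
  have : 1 + x ≠ 0 := by positivity
  have hsq : 1 - ((1 - x) / (1 + x)) ^ 2 = 4 * x / (1 + x) ^ 2 := by
    field_simp
    ring
  have key : (1 - x ^ 2) / (2 * x) =
      2 * ((1 - x) / (1 + x) + ((1 - x) / (1 + x)) ^ 3 / (4 * x / (1 + x) ^ 2)) := by
    field_simp [hx0.ne']
    ring
  rw [hsq] at h
  norm_num at h
  linarith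

noncomputable def remainderTerm (x : ℝ) : ℝ := -1 / log x - x / (1 - x) - x / 2

noncomputable def remainderBound (x : ℝ) : ℝ := -(1 - x) / log x - x

lemma remainderTerm_nonneg {x : ℝ} (hx0 : 0 < x) (hx1 : x < 1) : 0 ≤ remainderTerm x := by
  have hy : 0 < -log x := neg_pos.2 (log_neg hx0 hx1)
  have h1x : 0 < 1 - x := by linarith
  have h1x2 : 0 < 1 - x ^ 2 := by nlinarith
  have hinv : 2 * x / (1 - x ^ 2) ≤ 1 / -log x := by
    rw [le_one_div (by positivity) hy, one_div_div]
    exact neg_log_le_one_sub_sq_div_two_mul hx0 hx1.le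
  have hgap : x / (1 - x) + x / 2 ≤ 2 * x / (1 - x ^ 2) := by
    rw [div_add_div _ _ h1x.ne' two_ne_zero, div_le_div_iff₀ (by linarith) h1x2]
    nlinarith [mul_nonneg hx0.le (sq_nonneg (1 - x)), mul_pos hx0 h1x]
  rw [remainderTerm, neg_div, ← div_neg]
  linarith

lemma remainderTerm_le_remainderBound {x : ℝ} (hx0 : 0 < x) (hx1 : x < 1) :
    remainderTerm x ≤ remainderBound x := by
  have hy : 0 < -log x := neg_pos.2 (log_neg hx0 hx1)
  have h1x : 0 < 1 - x := by linarith
  have hinv : 1 / -log x ≤ (1 + x) / (2 * (1 - x)) := by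
    rw [one_div_le hy (by positivity), one_div_div]
    simpa [mul_div_assoc] using two_mul_one_sub_div_one_add_le_neg_log hx0 hx1.le
  have key : remainderBound x - remainderTerm x =
      x * ((1 + x) / (2 * (1 - x)) - 1 / -log x) := by
    rw [remainderBound, remainderTerm]
    field_simp
    ring
  nlinarith

noncomputable def dilog (x : ℝ) : ℝ := ∑' n : ℕ, x ^ (n + 1) / (n + 1) ^ 2

lemma hasSum_one_div_add_one_sq : HasSum (fun n : ℕ => 1 / ((n : ℝ) + 1) ^ 2) (π ^ 2 / 6) := by
  have h := (hasSum_nat_add_iff' 1).2 (by simpa using hasSum_zeta_two)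
  simpa using h

lemma norm_pow_add_one_div_sq_le {x : ℝ} (hx : |x| ≤ 1) (n : ℕ) :
    ‖x ^ (n + 1) / ((n : ℝ) + 1) ^ 2‖ ≤ 1 / ((n : ℝ) + 1) ^ 2 := by
  rw [norm_div, norm_pow, Real.norm_eq_abs, norm_pow, Real.norm_of_nonneg (by positivity)]
  gcongr
  exact pow_le_one₀ (abs_nonneg x) hx

lemma hasSum_dilog {x : ℝ} (hx : |x| ≤ 1) :
    HasSum (fun n : ℕ => x ^ (n + 1) / ((n : ℝ) + 1) ^ 2) (dilog x) :=
  (hasSum_one_div_add_one_sq.summable.of_norm_bounded (norm_pow_add_one_div_sq_le hx)).hasSum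

lemma dilog_one : dilog 1 = π ^ 2 / 6 := by
  simpa [dilog] using hasSum_one_div_add_one_sq.tsum_eq

lemma dilog_zero : dilog 0 = 0 := by
  simp [dilog]

lemma continuousOn_dilog : ContinuousOn dilog (Icc (-1) 1) :=
  continuousOn_tsum (fun n => by fun_prop) hasSum_one_div_add_one_sq.summable
    fun n x hx => norm_pow_add_one_div_sq_le (abs_le.2 hx) n

lemma dilog_le {x : ℝ} (hx0 : 0 ≤ x) (hx1 : x < 1) : dilog x ≤ x / (1 - x) := by
  have hgeom : HasSum (fun n : ℕ => x ^ (n + 1)) (x / (1 - x)) := by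
    simpa [pow_succ', div_eq_mul_inv] using (hasSum_geometric_of_lt_one hx0 hx1).mul_left x
  refine hasSum_le (fun n => ?_) (hasSum_dilog (abs_le.2 ⟨by linarith, hx1.le⟩)) hgeom
  exact div_le_self (by positivity) (one_le_pow₀ (by simp))

lemma hasDerivAt_dilog {x : ℝ} (hx : |x| < 1) (hx0 : x ≠ 0) :
    HasDerivAt dilog (-log (1 - x) / x) x := by
  obtain ⟨r, hxr, hr1⟩ := exists_between hx
  have hr0 : 0 < r := (abs_nonneg x).trans_lt hxr
  have hsum : ∑' n : ℕ, x ^ n / ((n : ℝ) + 1) = -log (1 - x) / x := by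
    rw [← (hasSum_pow_div_log_of_abs_lt_one hx).tsum_eq, ← tsum_div_const]
    congr 1 with n
    field_simp
    ring
  rw [← hsum]
  change HasDerivAt (fun z : ℝ => ∑' n : ℕ, z ^ (n + 1) / ((n : ℝ) + 1) ^ 2) _ x
  refine hasDerivAt_tsum_of_isPreconnected (u := fun n : ℕ => r ^ n) (y₀ := 0)
    (g' := fun (n : ℕ) (y : ℝ) => y ^ n / ((n : ℝ) + 1))
    (summable_geometric_of_lt_one hr0.le hr1) isOpen_Ioo isPreconnected_Ioo (fun n y _ => ?_)
    (fun n y hy => ?_) ⟨by linarith, hr0⟩ (by simp) (abs_lt.1 hxr)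
  · refine ((hasDerivAt_pow (n + 1) y).div_const (((n : ℝ) + 1) ^ 2)).congr_deriv ?_
    rw [Nat.add_sub_cancel]
    push_cast
    field_simp
  · rw [norm_div, norm_pow, Real.norm_eq_abs, Real.norm_of_nonneg (by positivity)]
    calc |y| ^ n / ((n : ℝ) + 1) ≤ |y| ^ n := div_le_self (by positivity) (by simp)
      _ ≤ r ^ n := pow_le_pow_left₀ (abs_nonneg y) (abs_le.2 ⟨hy.1.le, hy.2.le⟩) n

lemma continuousWithinAt_log_mul_log_one_sub :
    ContinuousWithinAt (fun x => log x * log (1 - x)) (Iic 1) 1 := by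
  have hbound : ∀ᶠ x in 𝓝[<] (1 : ℝ),
      ‖log x * log (1 - x)‖ ≤ |(1 - x) * log (1 - x)| / x := by
    filter_upwards [Ioo_mem_nhdsLT (zero_lt_one' ℝ)] with x hx
    have hlog : |log x| ≤ (1 - x) / x := by
      rw [abs_of_nonpos (log_nonpos hx.1.le hx.2.le), sub_div, div_self hx.1.ne', one_div]
      linarith [one_sub_inv_le_log_of_pos hx.1]
    calc ‖log x * log (1 - x)‖ = |log x| * |log (1 - x)| := by rw [Real.norm_eq_abs, abs_mul]
      _ ≤ (1 - x) / x * |log (1 - x)| := by gcongr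
      _ = |(1 - x) * log (1 - x)| / x := by
        rw [abs_mul, abs_of_pos (sub_pos.2 hx.2)]
        ring
  have hlim : Tendsto (fun x : ℝ => |(1 - x) * log (1 - x)| / x) (𝓝[<] 1) (𝓝 0) := by
    have : ContinuousAt (fun x : ℝ => |(1 - x) * log (1 - x)| / x) 1 := by
      have : Continuous fun x : ℝ => |(1 - x) * log (1 - x)| :=
        (continuous_const.sub continuous_id).mul_log.abs
      exact this.continuousAt.div continuousAt_id one_ne_zero
    simpa using this.tendsto.mono_left nhdsWithin_le_nhds
  refine continuousWithinAt_Iio_iff_Iic.1 ?_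
  simpa [ContinuousWithinAt] using squeeze_zero_norm' hbound hlim

theorem dilog_add_dilog_one_sub {x : ℝ} (hx0 : 0 ≤ x) (hx1 : x ≤ 1) :
    dilog x + dilog (1 - x) + log x * log (1 - x) = π ^ 2 / 6 := by
  rcases hx0.eq_or_lt with rfl | hx0
  · simp [dilog_zero, dilog_one]
  set H : ℝ → ℝ := fun t => dilog t + dilog (1 - t) + log t * log (1 - t)
  have hderiv : ∀ t ∈ Ioo (0 : ℝ) 1, HasDerivAt H 0 t := by
    intro t ⟨ht0, ht1⟩
    have h1t : 0 < 1 - t := sub_pos.2 ht1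
    have habs : |t| < 1 := abs_lt.2 ⟨by linarith, ht1⟩
    have habs' : |1 - t| < 1 := abs_lt.2 ⟨by linarith, by linarith⟩
    have hd1 := hasDerivAt_dilog habs ht0.ne'
    have hd2 := (hasDerivAt_dilog habs' h1t.ne').comp t ((hasDerivAt_id t).const_sub 1)
    have hd3 := (hasDerivAt_log ht0.ne').mul ((hasDerivAt_log h1t.ne').comp t
      ((hasDerivAt_id t).const_sub 1))
    refine ((hd1.add hd2).add hd3).congr_deriv ?_
    simp only [sub_sub_cancel, Function.comp_apply]
    field_simp
    ring
  have hcont : ContinuousOn H (Icc x 1) := by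
    intro t ⟨hxt, ht1⟩
    have hdilog : ContinuousWithinAt (fun t => dilog t + dilog (1 - t)) (Icc x 1) t := by
      refine ((continuousOn_dilog.mono ?_).add (continuousOn_dilog.comp (by fun_prop) ?_)) t
        ⟨hxt, ht1⟩
      · exact Icc_subset_Icc (by linarith) le_rfl
      · intro s ⟨hxs, hs1⟩
        exact ⟨by linarith, by linarith⟩
    refine hdilog.add ?_
    rcases ht1.lt_or_eq with ht1 | rfl
    · exact ((continuousAt_log (by linarith)).mul
        ((continuousAt_log (by linarith)).comp (by fun_prop))).continuousWithinAt
    · exact continuousWithinAt_log_mul_log_one_sub.mono Icc_subset_Iic_self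
  have hconst := constant_of_has_deriv_right_zero hcont
    (fun t ⟨hxt, ht1⟩ => (hderiv t ⟨hx0.trans_le hxt, ht1⟩).hasDerivWithinAt)
    1 ⟨hx1, le_rfl⟩
  simpa [H, dilog_zero, dilog_one] using hconst.symm

lemma pi_sq_div_six_sub_dilog_le {x : ℝ} (hx0 : 0 < x) (hx1 : x ≤ 1) :
    π ^ 2 / 6 - dilog x ≤ (1 - x) / x + log x * log (1 - x) := by
  have h := dilog_le (x := 1 - x) (by linarith) (by linarith)
  rw [sub_sub_cancel] at h
  linarith [dilog_add_dilog_one_sub hx0.le hx1]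

lemma hasSum_pow_div_mul_one_sub_pow {q : ℝ} (hq : |q| < 1) :
    HasSum (fun n : ℕ => q ^ (n + 1) / ((n + 1) * (1 - q ^ (n + 1))))
      (-∑' i : ℕ, log (1 - q ^ (i + 1))) := by
  set F : ℕ × ℕ → ℝ := fun p => q ^ ((p.1 + 1) * (p.2 + 1)) / (p.2 + 1)
  have hpow (k : ℕ) : |q ^ (k + 1)| < 1 := by
    rw [abs_pow]; exact pow_lt_one₀ (abs_nonneg q) hq k.succ_ne_zero
  have hrow (i : ℕ) : HasSum (fun n => F (i, n)) (-log (1 - q ^ (i + 1))) := by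
    simpa [F, pow_mul] using hasSum_pow_div_log_of_abs_lt_one (hpow i)
  have hcol (n : ℕ) :
      HasSum (fun i => F (i, n)) (q ^ (n + 1) / ((n + 1) * (1 - q ^ (n + 1)))) := by
    have h := (hasSum_geometric_of_abs_lt_one (hpow n)).mul_left (q ^ (n + 1) / (n + 1))
    rw [← div_eq_mul_inv, div_div] at h
    refine h.congr_fun fun i => ?_
    simp only [F]
    rw [mul_comm, pow_mul, pow_succ']
    ring
  have hF : Summable F := by
    refine .of_norm_bounded ((summable_geometric_of_lt_one (abs_nonneg q) hq).mul_of_nonneg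
      (summable_geometric_of_lt_one (abs_nonneg q) hq) (fun _ => by positivity)
      (fun _ => by positivity)) fun ⟨i, n⟩ => ?_
    calc ‖F (i, n)‖ = |q| ^ ((i + 1) * (n + 1)) / (n + 1) := by
          simp [F, abs_of_nonneg (by positivity : (0 : ℝ) ≤ n + 1)]
      _ ≤ |q| ^ ((i + 1) * (n + 1)) := div_le_self (by positivity) (by simp)
      _ ≤ |q| ^ (i + n) := pow_le_pow_of_le_one (abs_nonneg q) hq.le (by nlinarith)
      _ = |q| ^ i * |q| ^ n := pow_add _ _ _
  have hT := hF.hasSum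
  rw [← tsum_neg, (hT.prod_fiberwise hrow).tsum_eq]
  exact ((Equiv.prodComm ℕ ℕ).hasSum_iff.2 hT).prod_fiberwise hcol

lemma hasSum_remainderTerm {q : ℝ} (hq0 : 0 < q) (hq1 : q < 1) :
    HasSum (fun n : ℕ => remainderTerm (q ^ (n + 1)) / (n + 1))
      ((∑' i : ℕ, log (1 - q ^ (i + 1))) - π ^ 2 / (6 * log q) + log (1 - q) / 2) := by
  have hq : |q| < 1 := abs_lt.2 ⟨by linarith, hq1⟩
  have h := ((hasSum_one_div_add_one_sq.div_const (log q)).neg.sub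
    (hasSum_pow_div_mul_one_sub_pow hq)).sub ((hasSum_pow_div_log_of_abs_lt_one hq).div_const 2)
  rw [show (∑' i : ℕ, log (1 - q ^ (i + 1))) - π ^ 2 / (6 * log q) + log (1 - q) / 2 =
    -(π ^ 2 / 6 / log q) - -(∑' i : ℕ, log (1 - q ^ (i + 1))) - -log (1 - q) / 2 by ring]
  refine h.congr_fun fun n => ?_
  have hn : (n : ℝ) + 1 ≠ 0 := by positivity
  have hqn : 1 - q ^ (n + 1) ≠ 0 := (sub_pos.2 (pow_lt_one₀ hq0.le hq1 n.succ_ne_zero)).ne'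
  rw [remainderTerm, log_pow]
  push_cast
  field_simp [(log_neg hq0 hq1).ne]

lemma hasSum_remainderBound {q : ℝ} (hq0 : 0 < q) (hq1 : q < 1) :
    HasSum (fun n : ℕ => remainderBound (q ^ (n + 1)) / (n + 1))
      ((dilog q - π ^ 2 / 6) / log q + log (1 - q)) := by
  have hq : |q| < 1 := abs_lt.2 ⟨by linarith, hq1⟩
  have h := (((hasSum_one_div_add_one_sq.sub (hasSum_dilog hq.le)).div_const (log q)).neg.sub
    (hasSum_pow_div_log_of_abs_lt_one hq))
  rw [show (dilog q - π ^ 2 / 6) / log q + log (1 - q) =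
    -((π ^ 2 / 6 - dilog q) / log q) - -log (1 - q) by ring]
  refine h.congr_fun fun n => ?_
  have hn : (n : ℝ) + 1 ≠ 0 := by positivity
  rw [remainderBound, log_pow]
  push_cast
  field_simp [(log_neg hq0 hq1).ne]

/-- Euler–Maclaurin estimate for `∑_{i≥1} log(1 - qⁱ)`. -/
theorem sum_log_one_sub_pow_bounds (q : ℝ) (hq0 : 0 < q) (hq1 : q < 1) :
    q * Real.log q / (6 * (1 - q)) ≤
      (∑' i : ℕ, Real.log (1 - q ^ (i + 1))) - π ^ 2 / (6 * Real.log q)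
        + Real.log (1 - q) / 2 ∧
    (∑' i : ℕ, Real.log (1 - q ^ (i + 1))) - π ^ 2 / (6 * Real.log q)
        + Real.log (1 - q) / 2 ≤ -((1 - q) / (q * Real.log q)) := by
  have hlog : log q < 0 := log_neg hq0 hq1
  have hpow (n : ℕ) : 0 < q ^ (n + 1) ∧ q ^ (n + 1) < 1 :=
    ⟨pow_pos hq0 _, pow_lt_one₀ hq0.le hq1 n.succ_ne_zero⟩
  have hE := hasSum_remainderTerm hq0 hq1
  constructor
  · have hneg : q * log q / (6 * (1 - q)) ≤ 0 :=
      div_nonpos_of_nonpos_of_nonneg (mul_nonpos_of_nonneg_of_nonpos hq0.le hlog.le) (by linarith)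
    exact hneg.trans <| hE.nonneg fun n =>
      div_nonneg (remainderTerm_nonneg (hpow n).1 (hpow n).2) (by positivity)
  · calc _ ≤ (dilog q - π ^ 2 / 6) / log q + log (1 - q) :=
          hasSum_le (fun n => div_le_div_of_nonneg_right
            (remainderTerm_le_remainderBound (hpow n).1 (hpow n).2) (by positivity))
            hE (hasSum_remainderBound hq0 hq1)
      _ ≤ (-((1 - q) / q) - log q * log (1 - q)) / log q + log (1 - q) := by
          have := pi_sq_div_six_sub_dilog_le hq0 hq1.le
          gcongr ?_ + _
          exact div_le_div_of_nonpos_of_le hlog.le (by linarith)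
      _ = -((1 - q) / (q * log q)) := by
          field_simp [hlog.ne]
          ring
end

section
/- For any real 0 < q < 1, ∫_1^∞ log(1 - q^x) dx = (1/log q)·(π²/6 - log(q)·log(1-q) - ∑_{j=1}^∞ (1-q)^j/j²). -/
open Real Filter MeasureTheory Set Topology

noncomputable def Li2 (x : ℝ) : ℝ := ∑' j : ℕ, x ^ (j + 1) / ((j : ℝ) + 1) ^ 2



lemma summable_inv_sq : Summable (fun j : ℕ => 1 / ((j : ℝ) + 1) ^ 2) := by
  have := (Real.summable_one_div_nat_pow (p := 2)).2 one_lt_two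
  have := (summable_nat_add_iff 1).2 this
  simpa using this

lemma Li2_bound {n : ℕ} {x : ℝ} (hx : |x| ≤ 1) :
    ‖x ^ (n + 1) / ((n : ℝ) + 1) ^ 2‖ ≤ 1 / ((n : ℝ) + 1) ^ 2 := by
  rw [norm_div, norm_pow, Real.norm_eq_abs, Real.norm_eq_abs,
    abs_of_pos (show (0:ℝ) < ((n:ℝ)+1)^2 by positivity)]
  gcongr
  exact pow_le_one₀ (abs_nonneg x) hx

lemma Li2_summable {x : ℝ} (hx : |x| ≤ 1) :
    Summable (fun j : ℕ => x ^ (j + 1) / ((j : ℝ) + 1) ^ 2) :=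
  summable_inv_sq.of_norm_bounded fun n => Li2_bound hx

lemma Li2_contOn : ContinuousOn Li2 (Icc (-1 : ℝ) 1) := by
  have h := tendstoUniformlyOn_tsum (f := fun (j : ℕ) (x : ℝ) => x ^ (j + 1) / ((j : ℝ) + 1) ^ 2)
    summable_inv_sq (s := Icc (-1 : ℝ) 1) ?_
  · exact h.continuousOn (Filter.Eventually.frequently (Filter.Eventually.of_forall fun t =>
      continuousOn_finset_sum t fun j _ => by fun_prop))
  · intro n x hx
    exact Li2_bound (abs_le.2 ⟨hx.1, hx.2⟩)

lemma Li2_zero : Li2 0 = 0 := by simp [Li2]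

lemma Li2_one : Li2 1 = π ^ 2 / 6 := by
  have h := hasSum_zeta_two
  have h1 : HasSum (fun n : ℕ => (1:ℝ) / ((n : ℝ) + 1) ^ 2) (π ^ 2 / 6) := by
    have := (hasSum_nat_add_iff (f := fun n : ℕ => (1:ℝ) / (n : ℝ) ^ 2) 1).2 (by simpa using h)
    simpa using this
  simpa [Li2] using h1.tsum_eq


lemma aux_hasDerivAt (n : ℕ) (y : ℝ) :
    HasDerivAt (fun z : ℝ => z ^ (n + 1) / ((n : ℝ) + 1) ^ 2) (y ^ n / ((n : ℝ) + 1)) y := by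
  have h := (hasDerivAt_pow (n + 1) y).div_const (((n : ℝ) + 1) ^ 2)
  have e : (↑(n + 1) : ℝ) * y ^ (n + 1 - 1) / ((n : ℝ) + 1) ^ 2 = y ^ n / ((n : ℝ) + 1) := by
    push_cast
    have : (n : ℝ) + 1 ≠ 0 := by positivity
    field_simp
  rwa [e] at h

lemma Li2_hasDerivAt {x : ℝ} (hx : |x| < 1) :
    HasDerivAt Li2 (∑' j : ℕ, x ^ j / ((j : ℝ) + 1)) x := by
  set a : ℝ := (|x| + 1) / 2 with ha
  have hab : 0 ≤ |x| := abs_nonneg x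
  have ha0 : 0 < a := by positivity
  have ha1 : a < 1 := by rw [ha]; linarith
  have hxa : |x| < a := by rw [ha]; linarith
  exact hasDerivAt_tsum_of_isPreconnected
    (summable_geometric_of_lt_one ha0.le ha1)
    isOpen_Ioo (convex_Ioo (-a) a).isPreconnected
    (fun n y _ => aux_hasDerivAt n y)
    (fun n y hy => by
      have hya : |y| ≤ a := by rw [abs_le]; exact ⟨hy.1.le, hy.2.le⟩
      rw [norm_div, norm_pow, Real.norm_eq_abs, Real.norm_eq_abs,
        abs_of_pos (show (0:ℝ) < (n:ℝ)+1 by positivity)]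
      calc |y| ^ n / ((n:ℝ) + 1) ≤ a ^ n / 1 := by
            gcongr <;> first
              | exact hya
              | exact abs_nonneg y
              | linarith [Nat.cast_nonneg (α := ℝ) n]
          _ = a ^ n := by ring)
    (show (0:ℝ) ∈ Ioo (-a) a by constructor <;> linarith)
    (by
      apply summable_of_isBigO_nat (g := fun _ : ℕ => (0:ℝ)) summable_zero
      apply Asymptotics.isBigO_of_le
      intro n
      simp)
    (show x ∈ Ioo (-a) a from abs_lt.1 hxa)

lemma tsum_deriv_eq {x : ℝ} (hx : |x| < 1) (hx0 : x ≠ 0) :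
    ∑' j : ℕ, x ^ j / ((j : ℝ) + 1) = -Real.log (1 - x) / x := by
  have h := (hasSum_pow_div_log_of_abs_lt_one hx).div_const x
  have h2 : HasSum (fun j : ℕ => x ^ j / ((j : ℝ) + 1)) (-Real.log (1 - x) / x) := by
    refine h.congr_fun fun j => ?_
    rw [pow_succ]
    field_simp
  exact h2.tsum_eq



noncomputable def Fref (x : ℝ) : ℝ := Li2 x + Li2 (1 - x) + Real.log x * Real.log (1 - x)

lemma Fref_hasDerivAt {x : ℝ} (hx : x ∈ Ioo (0:ℝ) 1) : HasDerivAt Fref 0 x := by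
  obtain ⟨hx0, hx1⟩ := hx
  have hx0' : x ≠ 0 := ne_of_gt hx0
  have h1x0 : (0:ℝ) < 1 - x := by linarith
  have h1x0' : (1:ℝ) - x ≠ 0 := ne_of_gt h1x0
  have habs : |x| < 1 := by rw [abs_of_pos hx0]; exact hx1
  have habs' : |1 - x| < 1 := by rw [abs_of_pos h1x0]; linarith
  have d1 : HasDerivAt Li2 (-Real.log (1 - x) / x) x := by
    have := Li2_hasDerivAt habs
    rwa [tsum_deriv_eq habs hx0'] at this
  have d2 : HasDerivAt (fun y : ℝ => Li2 (1 - y)) (Real.log x / (1 - x)) x := by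
    have h := Li2_hasDerivAt habs'
    rw [tsum_deriv_eq habs' h1x0'] at h
    have hcomp := h.comp x ((hasDerivAt_id x).const_sub 1)
    refine HasDerivAt.congr_deriv hcomp ?_
    have : (1:ℝ) - (1 - x) = x := by ring
    rw [this]
    field_simp
  have d3 : HasDerivAt (fun y : ℝ => Real.log y * Real.log (1 - y))
      ((1 / x) * Real.log (1 - x) + Real.log x * (-1 / (1 - x))) x := by
    have dlog : HasDerivAt Real.log (1 / x) x := by
      simpa [one_div] using Real.hasDerivAt_log hx0'
    have dlog2 : HasDerivAt (fun y : ℝ => Real.log (1 - y)) (-1 / (1 - x)) x := by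
      have h := (Real.hasDerivAt_log h1x0').comp x ((hasDerivAt_id x).const_sub 1)
      refine HasDerivAt.congr_deriv h ?_
      field_simp
    exact dlog.mul dlog2
  have := (d1.add d2).add d3
  refine HasDerivAt.congr_deriv this ?_
  field_simp
  ring

lemma Fref_const {x : ℝ} (hx : x ∈ Ioo (0:ℝ) 1) : Fref x = π ^ 2 / 6 := by
  -- Fref is constant on Ioo 0 1
  have hconst : ∀ y ∈ Ioo (0:ℝ) 1, ∀ z ∈ Ioo (0:ℝ) 1, Fref y = Fref z := by
    intro y hy z hz
    have hdiff : DifferentiableOn ℝ Fref (Ioo (0:ℝ) 1) :=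
      fun w hw => ((Fref_hasDerivAt hw).differentiableAt).differentiableWithinAt
    apply (convex_Ioo (0:ℝ) 1).is_const_of_fderivWithin_eq_zero hdiff _ hy hz
    intro w hw
    have h := (Fref_hasDerivAt hw).hasFDerivAt.hasFDerivWithinAt (s := Ioo (0:ℝ) 1)
    rw [h.fderivWithin (isOpen_Ioo.uniqueDiffOn w hw)]
    ext v
    simp
  set l : Filter ℝ := 𝓝[Ioo (0:ℝ) 1] 0 with hl
  have hne : l.NeBot := by
    rw [hl]
    refine mem_closure_iff_nhdsWithin_neBot.1 ?_
    rw [closure_Ioo (by norm_num : (0:ℝ) ≠ 1)]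
    exact ⟨le_refl 0, by norm_num⟩
  have hmem : ∀ᶠ y in l, y ∈ Ioo (0:ℝ) 1 := self_mem_nhdsWithin
  have hle : l ≤ 𝓝 (0:ℝ) := nhdsWithin_le_nhds
  -- Li2 x → 0
  have t1 : Tendsto Li2 l (𝓝 0) := by
    have := (Li2_contOn 0 (by norm_num)).tendsto
    rw [Li2_zero] at this
    exact this.mono_left (nhdsWithin_mono _ (fun y hy => ⟨by linarith [hy.1], by linarith [hy.2]⟩))
  -- Li2 (1 - x) → π²/6
  have t2 : Tendsto (fun y => Li2 (1 - y)) l (𝓝 (π ^ 2 / 6)) := by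
    have hc := (Li2_contOn 1 (by norm_num)).tendsto
    rw [Li2_one] at hc
    refine hc.comp ?_
    rw [tendsto_nhdsWithin_iff]
    constructor
    · have : Tendsto (fun y : ℝ => 1 - y) l (𝓝 (1 - 0)) :=
        (tendsto_const_nhds.sub tendsto_id).mono_left hle
      simpa using this
    · filter_upwards [hmem] with y hy
      exact ⟨by linarith [hy.2], by linarith [hy.1]⟩
  -- log x * log (1-x) → 0
  have t3 : Tendsto (fun y => Real.log y * Real.log (1 - y)) l (𝓝 0) := by
    have hxx : Tendsto (fun y : ℝ => -2 * (Real.log y * y)) l (𝓝 0) := by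
      have h := tendsto_log_mul_rpow_nhdsGT_zero (r := 1) one_pos
      simp only [Real.rpow_one] at h
      have hle2 : l ≤ 𝓝[>] (0:ℝ) :=
        nhdsWithin_mono (0:ℝ) (fun y (hy : y ∈ Ioo (0:ℝ) 1) => hy.1)
      have h2 : Tendsto (fun y : ℝ => -2 * (Real.log y * y)) l (𝓝 (-2 * 0)) :=
        ((h.const_mul (-2)).mono_left hle2)
      simpa using h2
    apply squeeze_zero_norm' _ hxx
    have hsmall : ∀ᶠ y in l, y < 1/2 := by
      have : Iio (1/2 : ℝ) ∈ 𝓝 (0:ℝ) := Iio_mem_nhds (by norm_num)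
      exact hle this
    filter_upwards [hmem, hsmall] with y hy hy2
    have hy0 : 0 < y := hy.1
    have hy1 : y < 1 := hy.2
    have hly : Real.log y ≤ 0 := (Real.log_neg hy0 hy1).le
    have h1y : (0:ℝ) < 1 - y := by linarith
    have hl1y : Real.log (1 - y) ≤ 0 := Real.log_nonpos (by linarith) (by linarith)
    have hbound : -Real.log (1 - y) ≤ 2 * y := by
      have hinv : Real.log ((1 - y)⁻¹) ≤ (1 - y)⁻¹ - 1 :=
        Real.log_le_sub_one_of_pos (by positivity)
      rw [Real.log_inv] at hinv
      have : (1 - y)⁻¹ - 1 = y / (1 - y) := by field_simp; ring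
      rw [this] at hinv
      have : y / (1 - y) ≤ 2 * y := by
        rw [div_le_iff₀ h1y]
        nlinarith
      linarith
    rw [Real.norm_eq_abs, abs_mul, abs_of_nonpos hly, abs_of_nonpos hl1y]
    calc -Real.log y * -Real.log (1 - y) ≤ -Real.log y * (2 * y) := by
          apply mul_le_mul_of_nonneg_left hbound (by linarith)
        _ = -2 * (Real.log y * y) := by ring
  have hFt : Tendsto Fref l (𝓝 (π ^ 2 / 6)) := by
    have := (t1.add t2).add t3
    simp only [add_zero, zero_add] at this
    exact this
  have hFc : Tendsto Fref l (𝓝 (Fref x)) := by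
    refine Tendsto.congr' ?_ tendsto_const_nhds
    filter_upwards [hmem] with y hy
    exact hconst x hx y hy
  exact tendsto_nhds_unique hFc hFt

lemma rpow_integrableOn {r : ℝ} (hr0 : 0 < r) (hr1 : r < 1) :
    IntegrableOn (fun x : ℝ => r ^ x) (Ioi (1:ℝ)) := by
  have hlog : Real.log r < 0 := Real.log_neg hr0 hr1
  have h := exp_neg_integrableOn_Ioi (1:ℝ) (b := -Real.log r) (by linarith)
  refine h.congr_fun (fun x _ => ?_) measurableSet_Ioi
  rw [Real.rpow_def_of_pos hr0]
  ring_nf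

lemma integral_rpow_Ioi {r : ℝ} (hr0 : 0 < r) (hr1 : r < 1) :
    ∫ x in Ioi (1:ℝ), r ^ x = -r / Real.log r := by
  have hlog : Real.log r < 0 := Real.log_neg hr0 hr1
  have hlog' : Real.log r ≠ 0 := ne_of_lt hlog
  have key := integral_Ioi_of_hasDerivAt_of_tendsto
    (f := fun x : ℝ => r ^ x / Real.log r) (f' := fun x : ℝ => r ^ x) (a := 1) (m := 0)
    ?_ ?_ (rpow_integrableOn hr0 hr1) ?_
  · rw [key]; rw [Real.rpow_one]; ring
  · exact (((Real.continuousAt_const_rpow hr0.ne').div_const _).continuousWithinAt)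
  · intro x _
    have h : HasDerivAt (fun x : ℝ => Real.exp (x * Real.log r) / Real.log r)
        (Real.exp (x * Real.log r)) x := by
      have := (((hasDerivAt_id x).mul_const (Real.log r)).exp).div_const (Real.log r)
      simpa [mul_div_assoc, mul_div_cancel_right₀ _ hlog'] using this
    have e : ∀ y : ℝ, r ^ y = Real.exp (y * Real.log r) := fun y => by
      rw [Real.rpow_def_of_pos hr0]; ring_nf
    simp_rw [e]
    exact h
  · have h1 : Tendsto (fun x : ℝ => x * Real.log r) atTop atBot :=
      tendsto_id.atTop_mul_const_of_neg hlog
    have h2 : Tendsto (fun x : ℝ => Real.exp (x * Real.log r)) atTop (𝓝 0) :=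
      Real.tendsto_exp_atBot.comp h1
    have e : ∀ y : ℝ, r ^ y = Real.exp (y * Real.log r) := fun y => by
      rw [Real.rpow_def_of_pos hr0]; ring_nf
    simp_rw [e]
    simpa using h2.div_const (Real.log r)



lemma integral_log_eq_Li2 {q : ℝ} (hq0 : 0 < q) (hq1 : q < 1) :
    ∫ x in Ioi (1:ℝ), Real.log (1 - q ^ x) = Li2 q / Real.log q := by
  have hlog : Real.log q < 0 := Real.log_neg hq0 hq1
  have hlog' : Real.log q ≠ 0 := ne_of_lt hlog
  set f : ℕ → ℝ → ℝ := fun j x => (q ^ (j + 1) : ℝ) ^ x / ((j : ℝ) + 1) with hf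
  have hqp : ∀ j : ℕ, (0:ℝ) < q ^ (j + 1) := fun j => pow_pos hq0 _
  have hq1p : ∀ j : ℕ, (q:ℝ) ^ (j + 1) < 1 := fun j => pow_lt_one₀ hq0.le hq1 (Nat.succ_ne_zero j)
  -- each f j is integrable on Ioi 1
  have hint : ∀ j : ℕ, IntegrableOn (f j) (Ioi (1:ℝ)) := fun j =>
    (rpow_integrableOn (hqp j) (hq1p j)).div_const _
  -- value of each integral
  have hval : ∀ j : ℕ, ∫ x in Ioi (1:ℝ), f j x
      = q ^ (j + 1) / ((j : ℝ) + 1) ^ 2 * (-1 / Real.log q) := by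
    intro j
    rw [hf]
    simp only []
    rw [integral_div, integral_rpow_Ioi (hqp j) (hq1p j), Real.log_pow]
    push_cast
    have hj : ((j : ℝ) + 1) ≠ 0 := by positivity
    field_simp
  -- nonnegativity of f j on Ioi 1
  have hnonneg : ∀ j : ℕ, ∀ x : ℝ, 0 ≤ f j x := fun j x => by
    rw [hf]
    have := Real.rpow_nonneg (hqp j).le x
    positivity
  -- summability of the integrals of the norms
  have hsum : Summable fun j : ℕ => ∫ x in Ioi (1:ℝ), ‖f j x‖ := by
    have he : ∀ j : ℕ, (∫ x in Ioi (1:ℝ), ‖f j x‖) = ∫ x in Ioi (1:ℝ), f j x := by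
      intro j
      refine integral_congr_ae (Filter.Eventually.of_forall fun x => ?_)
      exact Real.norm_of_nonneg (hnonneg j x)
    rw [funext he]
    rw [funext hval]
    apply Summable.mul_right
    have hg : Summable (fun j : ℕ => q * q ^ j) :=
      (summable_geometric_of_lt_one hq0.le hq1).mul_left q
    refine Summable.of_nonneg_of_le (fun j => by positivity) (fun j => ?_) hg
    calc q ^ (j + 1) / ((j : ℝ) + 1) ^ 2 ≤ q ^ (j + 1) / 1 := by
          gcongr <;> first
            | exact (hqp j).le
            | nlinarith [Nat.cast_nonneg (α := ℝ) j]
            | exact le_refl _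
        _ = q * q ^ j := by rw [pow_succ]; ring
  -- swap sum and integral
  have hswap := integral_tsum_of_summable_integral_norm hint hsum
  -- pointwise identity on Ioi 1
  have hpt : ∀ x ∈ Ioi (1:ℝ), ∑' j : ℕ, f j x = -Real.log (1 - q ^ x) := by
    intro x hx
    have hx0 : (0:ℝ) < x := lt_trans one_pos hx
    have hq0x : 0 < q ^ x := Real.rpow_pos_of_pos hq0 x
    have hq1x : q ^ x < 1 := Real.rpow_lt_one hq0.le hq1 hx0
    have habs : |q ^ x| < 1 := by rw [abs_of_pos hq0x]; exact hq1x
    have h := hasSum_pow_div_log_of_abs_lt_one habs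
    have he : ∀ j : ℕ, (q ^ x) ^ (j + 1) / ((j:ℝ) + 1) = f j x := by
      intro j
      rw [hf]
      simp only []
      congr 1
      rw [← Real.rpow_natCast (q ^ x) (j + 1), ← Real.rpow_mul hq0.le,
        ← Real.rpow_natCast q (j + 1), ← Real.rpow_mul hq0.le, mul_comm]
    rw [← (h.congr_fun fun j => (he j).symm).tsum_eq]
  have hmeas : MeasurableSet (Ioi (1:ℝ)) := measurableSet_Ioi
  have hcongr : ∫ x in Ioi (1:ℝ), (∑' j : ℕ, f j x) = ∫ x in Ioi (1:ℝ), -Real.log (1 - q ^ x) :=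
    setIntegral_congr_fun hmeas (fun x hx => hpt x hx)
  have hL : ∑' j : ℕ, ∫ x in Ioi (1:ℝ), f j x = Li2 q * (-1 / Real.log q) := by
    rw [funext hval, Li2, tsum_mul_right]
  rw [hL, hcongr, integral_neg] at hswap
  have : ∫ x in Ioi (1:ℝ), Real.log (1 - q ^ x) = -(Li2 q * (-1 / Real.log q)) := by
    linarith [hswap]
  rw [this]
  field_simp


theorem integral_log_one_sub_rpow (q : ℝ) (hq0 : 0 < q) (hq1 : q < 1) :
    ∫ x in Set.Ioi (1 : ℝ), Real.log (1 - q ^ x)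
      = (1 / Real.log q) *
          (π ^ 2 / 6 - Real.log q * Real.log (1 - q)
            - ∑' j : ℕ, (1 - q) ^ (j + 1) / ((j : ℝ) + 1) ^ 2) := by
  have hrefl : Fref q = π ^ 2 / 6 := Fref_const ⟨hq0, hq1⟩
  have hLi : ∑' j : ℕ, (1 - q) ^ (j + 1) / ((j : ℝ) + 1) ^ 2 = Li2 (1 - q) := rfl
  rw [hLi, integral_log_eq_Li2 hq0 hq1]
  rw [Fref] at hrefl
  have : π ^ 2 / 6 - Real.log q * Real.log (1 - q) - Li2 (1 - q) = Li2 q := by linarith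
  rw [this]
  ring
end

section
/- Fix 0 < q < 1 and integers 1 ≤ k ≤ n. Let F_k = ∏_{i=1}^{k}(1-q^i)/(1-q^{n-k+i}). Then F_k ≤ exp(-q·(1-q^{min(k,n-k)})/(2(1-q))). -/
/-- Upper bound on the flush probability. -/
theorem flush_prob_upper (q : ℝ) (hq0 : 0 < q) (hq1 : q < 1) (k n : ℕ)
    (hk : 1 ≤ k) (hkn : k ≤ n) :
    (∏ i ∈ Finset.Icc 1 k, (1 - q ^ i) / (1 - q ^ (n - k + i)))
      ≤ Real.exp (-(q * (1 - q ^ min k (n - k)) / (2 * (1 - q)))) := by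
  set m := min k (n - k) with hm
  have hmk : m ≤ k := min_le_left _ _
  have hmnk : m ≤ n - k := min_le_right _ _
  have hq0' : (0:ℝ) ≤ q := hq0.le
  -- basic facts about factors
  have hden : ∀ i : ℕ, 1 ≤ i → 0 < 1 - q ^ (n - k + i) := by
    intro i hi
    have : q ^ (n - k + i) < 1 := pow_lt_one₀ hq0' hq1 (by omega)
    linarith
  have hfac0 : ∀ i ∈ Finset.Icc 1 k, 0 ≤ (1 - q ^ i) / (1 - q ^ (n - k + i)) := by
    intro i hi
    simp only [Finset.mem_Icc] at hi
    have h2 : q ^ i < 1 := pow_lt_one₀ hq0' hq1 (by omega)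
    exact div_nonneg (by linarith) (hden i hi.1).le
  have hfac1 : ∀ i ∈ Finset.Icc 1 k, (1 - q ^ i) / (1 - q ^ (n - k + i)) ≤ 1 := by
    intro i hi
    simp only [Finset.mem_Icc] at hi
    have h1 : q ^ (n - k + i) ≤ q ^ i := pow_le_pow_of_le_one hq0' hq1.le (by omega)
    rw [div_le_one (hden i hi.1)]
    linarith
  have hsub : Finset.Icc 1 m ⊆ Finset.Icc 1 k := Finset.Icc_subset_Icc_right hmk
  -- step 1 : restrict the product to Icc 1 m
  have step1 : (∏ i ∈ Finset.Icc 1 k, (1 - q ^ i) / (1 - q ^ (n - k + i)))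
      ≤ ∏ i ∈ Finset.Icc 1 m, (1 - q ^ i) / (1 - q ^ (n - k + i)) := by
    rw [← Finset.prod_sdiff hsub]
    have h1 : (∏ i ∈ Finset.Icc 1 k \ Finset.Icc 1 m,
        (1 - q ^ i) / (1 - q ^ (n - k + i))) ≤ 1 :=
      Finset.prod_le_one (fun i hi => hfac0 i (Finset.mem_sdiff.mp hi).1)
        (fun i hi => hfac1 i (Finset.mem_sdiff.mp hi).1)
    have h2 : 0 ≤ ∏ i ∈ Finset.Icc 1 m, (1 - q ^ i) / (1 - q ^ (n - k + i)) :=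
      Finset.prod_nonneg (fun i hi => hfac0 i (hsub hi))
    nlinarith
  -- step 2 : pointwise bound by exponential on Icc 1 m
  have step2 : (∏ i ∈ Finset.Icc 1 m, (1 - q ^ i) / (1 - q ^ (n - k + i)))
      ≤ ∏ i ∈ Finset.Icc 1 m, Real.exp (-(q ^ i) / 2) := by
    apply Finset.prod_le_prod (fun i hi => hfac0 i (hsub hi))
    intro i hi
    simp only [Finset.mem_Icc] at hi
    have hi1 := hi.1
    have him := hi.2
    have hd := hden i hi1
    have key : (1 - q ^ i) / (1 - q ^ (n - k + i)) ≤ 1 - q ^ i / 2 := by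
      rw [div_le_iff₀ hd]
      have hsplit : q ^ (n - k + i) = q ^ (n - k) * q ^ i := pow_add q (n - k) i
      have hba : q ^ (n - k) ≤ q ^ i := pow_le_pow_of_le_one hq0' hq1.le (by omega)
      have hi0 : 0 < q ^ i := pow_pos hq0 i
      nlinarith [sq_nonneg (1 - q ^ (n - k)), mul_pos hi0 (pow_pos hq0 (n - k))]
    have hexp : 1 - q ^ i / 2 ≤ Real.exp (-(q ^ i) / 2) := by
      have := Real.add_one_le_exp (-(q ^ i) / 2)
      linarith
    linarith
  -- step 3 : product of exponentials is exponential of geometric sum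
  have step3 : (∏ i ∈ Finset.Icc 1 m, Real.exp (-(q ^ i) / 2))
      = Real.exp (-(q * (1 - q ^ m) / (2 * (1 - q)))) := by
    rw [← Real.exp_sum]
    congr 1
    have hsum : ∑ i ∈ Finset.Icc 1 m, q ^ i = (q ^ (m + 1) - q ^ 1) / (q - 1) := by
      rw [← Finset.Ico_add_one_right_eq_Icc, geom_sum_Ico (ne_of_lt hq1) (by omega)]
    have hsum2 : ∑ i ∈ Finset.Icc 1 m, -(q ^ i) / 2
        = -(∑ i ∈ Finset.Icc 1 m, q ^ i) / 2 := by
      rw [← Finset.sum_div, ← Finset.sum_neg_distrib]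
    have h1 : q - 1 ≠ 0 := by linarith
    have h2 : (1:ℝ) - q ≠ 0 := by linarith
    rw [hsum2, hsum, pow_succ, pow_one]
    field_simp
    ring
  calc (∏ i ∈ Finset.Icc 1 k, (1 - q ^ i) / (1 - q ^ (n - k + i)))
      ≤ ∏ i ∈ Finset.Icc 1 m, (1 - q ^ i) / (1 - q ^ (n - k + i)) := step1
    _ ≤ ∏ i ∈ Finset.Icc 1 m, Real.exp (-(q ^ i) / 2) := step2
    _ = Real.exp (-(q * (1 - q ^ m) / (2 * (1 - q)))) := step3
end

section
/- Let 1 ≤ k ≤ n and suppose the permutation π ∈ S_n contains σ ∈ S_k consecutively, i.e., there is an index i with st(π(i),...,π(i+k-1)) = σ, where st denotes standardization. Then the treewidth of the union graph L(π) on {1,...,n}, whose edges are {j, j+1} for 1 ≤ j < n together with {π(j), π(j+1)} for 1 ≤ j < n, is at least the treewidth of the corresponding union graph L(σ) on {1,...,k}. -/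
lemma aux_chain_connected {ι : Type} (T : SimpleGraph ι) (S : ℕ → Set ι) :
    ∀ d : ℕ, (∀ j ≤ d, (T.induce (S j)).Connected) →
      (∀ j, j + 1 ≤ d → (S j ∩ S (j + 1)).Nonempty) →
      (T.induce (⋃ j ∈ Set.Iic d, S j)).Connected := by
  intro d
  induction d with
  | zero =>
    intro h _
    have he : ⋃ j ∈ Set.Iic 0, S j = S 0 := by simp
    rw [he]; exact h 0 le_rfl
  | succ d ih =>
    intro h hm
    have he : ⋃ j ∈ Set.Iic (d + 1), S j = (⋃ j ∈ Set.Iic d, S j) ∪ S (d + 1) := by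
      ext t
      simp only [Set.mem_iUnion, Set.mem_Iic, Set.mem_union]
      constructor
      · rintro ⟨j, hj, ht⟩
        rcases Nat.lt_or_ge j (d + 1) with h' | h'
        · exact Or.inl ⟨j, by omega, ht⟩
        · obtain rfl : j = d + 1 := by omega
          exact Or.inr ht
      · rintro (⟨j, hj, ht⟩ | ht)
        · exact ⟨j, by omega, ht⟩
        · exact ⟨d + 1, le_rfl, ht⟩
    rw [he]
    apply SimpleGraph.induce_union_connected
    · exact (ih (fun j hj => h j (by omega)) (fun j hj => hm j (by omega))).preconnected
    · exact (h (d + 1) le_rfl).preconnected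
    · obtain ⟨t, ht1, ht2⟩ := hm d (by omega)
      exact ⟨t, Set.mem_iUnion₂.mpr ⟨d, Set.mem_Iic.mpr le_rfl, ht1⟩, ht2⟩


open scoped ENNReal

/-- A tree decomposition of a graph `G`. -/
structure TreeDecomp {V : Type} (G : SimpleGraph V) where
  ι : Type
  T : SimpleGraph ι
  isTree : T.IsTree
  bag : ι → Finset V
  mem_bag : ∀ v : V, ∃ i, v ∈ bag i
  adj_bag : ∀ ⦃u w : V⦄, G.Adj u w → ∃ i, u ∈ bag i ∧ w ∈ bag i
  conn : ∀ v : V, (T.induce {i | v ∈ bag i}).Connected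

/-- The width of a tree decomposition: the maximal bag size minus one. -/
noncomputable def TreeDecomp.width {V : Type} {G : SimpleGraph V} (D : TreeDecomp G) : ℕ∞ :=
  ⨆ i, ((D.bag i).card : ℕ∞) - 1

/-- The treewidth of a graph: minimum width of a tree decomposition. -/
noncomputable def treewidth {V : Type} (G : SimpleGraph V) : ℕ∞ :=
  ⨅ D : TreeDecomp G, D.width

/-- The union graph `layer(π(P_n), P_n)` on `{0,…,n-1}`: edges `{j, j+1}` of the
path together with the edges `{π(j), π(j+1)}` of the permuted path. -/
def layerGraph (n : ℕ) (π : Equiv.Perm (Fin n)) : SimpleGraph (Fin n) :=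
  SimpleGraph.fromRel (fun a b =>
    (b : ℕ) = (a : ℕ) + 1 ∨
    ∃ j : Fin n, ∃ h : (j : ℕ) + 1 < n, π j = a ∧ π ⟨(j : ℕ) + 1, h⟩ = b)

/-- If `π ∈ S_n` contains `σ ∈ S_k` consecutively (as a consecutive pattern, i.e.
the window `π(i),…,π(i+k-1)` is order-isomorphic to `σ`), then the treewidth of
`layer(π(P_n), P_n)` is at least that of `layer(σ(P_k), P_k)`. -/
theorem treewidth_layerGraph_of_consecutive_pattern (n k : ℕ) (hk : 1 ≤ k) (hkn : k ≤ n)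
    (π : Equiv.Perm (Fin n)) (σ : Equiv.Perm (Fin k))
    (i : ℕ) (hik : i + k ≤ n)
    (hpattern : ∀ a b : Fin k,
      σ a < σ b ↔
        π ⟨i + (a : ℕ), by have := a.isLt; omega⟩ < π ⟨i + (b : ℕ), by have := b.isLt; omega⟩) :
    treewidth (layerGraph k σ) ≤ treewidth (layerGraph n π) := by
  classical
  have hn : 1 ≤ n := le_trans hk hkn
  -- the increasing enumeration of the window values
  set m : Fin k → Fin n := fun v =>
    π ⟨i + ((σ.symm v : Fin k) : ℕ), by have := (σ.symm v).isLt; omega⟩ with hm_def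
  have hm : ∀ v v' : Fin k, v < v' ↔ m v < m v' := by
    intro v v'
    have h := hpattern (σ.symm v) (σ.symm v')
    simpa [m] using h
  have hmle : ∀ v v' : Fin k, m v ≤ m v' ↔ v ≤ v' := by
    intro v v'
    rw [← not_lt, ← not_lt, hm v' v]
  have hminj : Function.Injective m := by
    intro v v' h
    exact le_antisymm ((hmle _ _).1 h.le) ((hmle _ _).1 h.ge)
  have hmσ : ∀ (a : Fin k) (ha : i + (a : ℕ) < n), m (σ a) = π ⟨i + (a : ℕ), ha⟩ := by
    intro a ha
    simp [m]
  -- the counting function and the contraction map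
  set cnt : Fin n → ℕ := fun u => (Finset.univ.filter (fun v : Fin k => m v ≤ u)).card
    with hcnt_def
  have hcnt_le : ∀ u, cnt u ≤ k := by
    intro u
    exact le_trans (Finset.card_filter_le _ _) (by simp)
  have hcnt_mono : ∀ u u' : Fin n, u ≤ u' → cnt u ≤ cnt u' := by
    intro u u' h
    apply Finset.card_le_card
    intro v hv
    simp only [Finset.mem_filter, Finset.mem_univ, true_and] at hv ⊢
    exact le_trans hv h
  have hcnt_m : ∀ v : Fin k, cnt (m v) = (v : ℕ) + 1 := by
    intro v
    have he : Finset.univ.filter (fun v' : Fin k => m v' ≤ m v) = Finset.Iic v := by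
      ext v'
      simp [hmle]
    simp only [cnt, he, Fin.card_Iic]
  have hcnt_pred : ∀ (w : Fin k), 1 ≤ (w : ℕ) → ∀ hu : (m w : ℕ) - 1 < n,
      cnt ⟨(m w : ℕ) - 1, hu⟩ = (w : ℕ) := by
    intro w hw hu
    have hmw1 : 1 ≤ (m w : ℕ) := by
      have h0 : (⟨0, by omega⟩ : Fin k) < w := by
        simp only [Fin.lt_def]; omega
      have := (hm _ _).1 h0
      simp only [Fin.lt_def] at this
      omega
    have he : Finset.univ.filter (fun v' : Fin k => m v' ≤ (⟨(m w : ℕ) - 1, hu⟩ : Fin n))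
        = Finset.Iio w := by
      ext v'
      simp only [Finset.mem_filter, Finset.mem_univ, true_and, Finset.mem_Iio]
      rw [Fin.le_def]
      constructor
      · intro h
        have : m v' < m w := by rw [Fin.lt_def]; simp at h ⊢; omega
        exact (hm _ _).2 this
      · intro h
        have : m v' < m w := (hm _ _).1 h
        rw [Fin.lt_def] at this
        simp
        omega
    simp only [cnt, he, Fin.card_Iio]
  set g : Fin n → Fin k := fun u => ⟨cnt u - 1, by have := hcnt_le u; omega⟩ with hg_def
  have hg_m : ∀ v : Fin k, g (m v) = v := by
    intro v
    simp only [g, Fin.ext_iff, hcnt_m, Nat.add_sub_cancel]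
  have hg_conv : ∀ u u' u'' : Fin n, u ≤ u' → u' ≤ u'' → g u = g u'' → g u' = g u := by
    intro u u' u'' h1 h2 h3
    have c1 := hcnt_mono u u' h1
    have c2 := hcnt_mono u' u'' h2
    simp only [g, Fin.ext_iff] at h3 ⊢
    omega
  -- given a tree decomposition of layer(π), build one of layer(σ)
  refine le_iInf fun D => ?_
  have key : ∀ ⦃u w : Fin n⦄, (layerGraph n π).Adj u w → ∃ t, u ∈ D.bag t ∧ w ∈ D.bag t :=
    D.adj_bag
  -- adjacency of consecutive vertices in layer(π)
  have hπpath : ∀ (a : ℕ) (ha : a + 1 < n),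
      (layerGraph n π).Adj ⟨a, by omega⟩ ⟨a + 1, ha⟩ := by
    intro a ha
    rw [layerGraph, SimpleGraph.fromRel_adj]
    constructor
    · simp [Fin.ext_iff]
    · exact Or.inl (Or.inl (by simp))
  let D' : TreeDecomp (layerGraph k σ) :=
    { ι := D.ι
      T := D.T
      isTree := D.isTree
      bag := fun t => (D.bag t).image g
      mem_bag := by
        intro v
        obtain ⟨t, ht⟩ := D.mem_bag (m v)
        exact ⟨t, Finset.mem_image.mpr ⟨m v, ht, hg_m v⟩⟩
      adj_bag := by
        intro v w hvw
        rw [layerGraph, SimpleGraph.fromRel_adj] at hvw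
        obtain ⟨hne, hrel⟩ := hvw
        -- from any of the four cases, produce u u' in Fin n adjacent in layer(π)
        -- with g u = v and g u' = w (in some order)
        have main : ∀ v w : Fin k, v ≠ w →
            ((w : ℕ) = (v : ℕ) + 1 ∨
              ∃ j : Fin k, ∃ h : (j : ℕ) + 1 < k, σ j = v ∧ σ ⟨(j : ℕ) + 1, h⟩ = w) →
            ∃ t, v ∈ (D.bag t).image g ∧ w ∈ (D.bag t).image g := by
          intro v w hnevw hrel
          rcases hrel with hpath | ⟨j, hj, hjv, hjw⟩
          · -- path edge: use the edge {m w - 1, m w}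
            have hvw' : v < w := by rw [Fin.lt_def]; omega
            have hmvw : m v < m w := (hm _ _).1 hvw'
            have hmw1 : 1 ≤ (m w : ℕ) := by
              rw [Fin.lt_def] at hmvw; omega
            have hu : (m w : ℕ) - 1 < n := by
              have := (m w).isLt; omega
            have hadj : (layerGraph n π).Adj ⟨(m w : ℕ) - 1, hu⟩ (m w) := by
              have h2 : ((m w : ℕ) - 1) + 1 < n := by have := (m w).isLt; omega
              have := hπpath ((m w : ℕ) - 1) h2
              have he : (⟨(m w : ℕ) - 1 + 1, h2⟩ : Fin n) = m w := by
                simp [Fin.ext_iff]; omega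
              rwa [he] at this
            obtain ⟨t, h1, h2⟩ := key hadj
            refine ⟨t, Finset.mem_image.mpr ⟨_, h1, ?_⟩, Finset.mem_image.mpr ⟨_, h2, hg_m w⟩⟩
            have hw1 : 1 ≤ (w : ℕ) := by omega
            have := hcnt_pred w hw1 hu
            simp only [g, Fin.ext_iff, this]
            omega
          · -- permuted path edge: use the edge {π(i+j), π(i+j+1)}
            have hij : i + (j : ℕ) + 1 < n := by have := j.isLt; omega
            have h1 : m v = π ⟨i + (j : ℕ), by omega⟩ := by rw [← hjv]; exact hmσ j (by omega)
            have h2 : m w = π ⟨i + (j : ℕ) + 1, hij⟩ := by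
              rw [← hjw]
              have := hmσ ⟨(j : ℕ) + 1, hj⟩ (by omega)
              rw [this]
              rfl
            have hadj : (layerGraph n π).Adj (m v) (m w) := by
              rw [layerGraph, SimpleGraph.fromRel_adj]
              constructor
              · intro hc
                exact hnevw (hminj hc)
              · refine Or.inl (Or.inr ⟨⟨i + (j : ℕ), by omega⟩, by simpa using hij, ?_, ?_⟩)
                · exact h1.symm
                · rw [h2]
            obtain ⟨t, ht1, ht2⟩ := key hadj
            exact ⟨t, Finset.mem_image.mpr ⟨_, ht1, hg_m v⟩,
              Finset.mem_image.mpr ⟨_, ht2, hg_m w⟩⟩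
        rcases hrel with h | h
        · exact main v w hne h
        · obtain ⟨t, h1, h2⟩ := main w v (Ne.symm hne) h
          exact ⟨t, h2, h1⟩
      conn := by
        intro v
        -- the branch set of v is an interval [lo, hi] in Fin n
        have hBne : (Finset.univ.filter (fun u : Fin n => g u = v)).Nonempty :=
          ⟨m v, by simp [hg_m v]⟩
        set lo : Fin n := (Finset.univ.filter (fun u : Fin n => g u = v)).min' hBne with hlo
        set hi : Fin n := (Finset.univ.filter (fun u : Fin n => g u = v)).max' hBne with hhi
        have hglo : g lo = v := by
          have := Finset.min'_mem _ hBne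
          simpa using this
        have hghi : g hi = v := by
          have := Finset.max'_mem _ hBne
          simpa using this
        have hchar : ∀ u : Fin n, g u = v ↔ lo ≤ u ∧ u ≤ hi := by
          intro u
          constructor
          · intro h
            exact ⟨Finset.min'_le _ _ (by simp [h]), Finset.le_max' _ _ (by simp [h])⟩
          · rintro ⟨h1, h2⟩
            rw [hg_conv lo u hi h1 h2 (hglo.trans hghi.symm), hglo]
        have hlohi : (lo : ℕ) ≤ (hi : ℕ) := by
          have := (hchar (m v)).1 (hg_m v)
          rw [Fin.le_def, Fin.le_def] at this
          omega
        set d : ℕ := (hi : ℕ) - (lo : ℕ) with hd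
        set S : ℕ → Set D.ι :=
          fun j => {t | ∃ u : Fin n, (u : ℕ) = (lo : ℕ) + j ∧ u ∈ D.bag t} with hS
        have hSeq : ∀ (j : ℕ) (h : (lo : ℕ) + j < n),
            S j = {t | (⟨(lo : ℕ) + j, h⟩ : Fin n) ∈ D.bag t} := by
          intro j h
          ext t
          simp only [S, Set.mem_setOf_eq]
          constructor
          · rintro ⟨u, hu, hb⟩
            have : u = (⟨(lo : ℕ) + j, h⟩ : Fin n) := by simp [Fin.ext_iff, hu]
            rwa [← this]
          · intro hb
            exact ⟨_, rfl, hb⟩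
        have hset : {t | v ∈ (D.bag t).image g} = ⋃ j ∈ Set.Iic d, S j := by
          ext t
          simp only [Set.mem_setOf_eq, Finset.mem_image, Set.mem_iUnion, Set.mem_Iic, S]
          constructor
          · rintro ⟨u, hb, hgu⟩
            have := (hchar u).1 hgu
            rw [Fin.le_def, Fin.le_def] at this
            exact ⟨(u : ℕ) - (lo : ℕ), by omega, u, by omega, hb⟩
          · rintro ⟨j, hj, u, hu, hb⟩
            refine ⟨u, hb, (hchar u).2 ⟨?_, ?_⟩⟩
            · rw [Fin.le_def]; omega
            · rw [Fin.le_def]; omega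
        show (D.T.induce {t | v ∈ (D.bag t).image g}).Connected
        rw [hset]
        apply aux_chain_connected
        · intro j hj
          have hjn : (lo : ℕ) + j < n := by
            have := hi.isLt; omega
          rw [hSeq j hjn]
          exact D.conn _
        · intro j hj
          have hjn : (lo : ℕ) + j + 1 < n := by
            have := hi.isLt; omega
          have hadj := hπpath ((lo : ℕ) + j) hjn
          obtain ⟨t, h1, h2⟩ := key hadj
          refine ⟨t, ⟨⟨(lo : ℕ) + j, by omega⟩, rfl, h1⟩, ⟨⟨(lo : ℕ) + j + 1, hjn⟩, rfl, h2⟩⟩ }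
  refine le_trans (iInf_le _ D') ?_
  refine iSup_le fun t => ?_
  refine le_iSup_of_le t ?_
  refine tsub_le_tsub_right ?_ 1
  exact_mod_cast Finset.card_image_le
end

section
/- For any graph G, the treewidth of G is at most the cutwidth of G, where cutwidth is the minimum over injective maps φ: V → ℤ of the maximum over x ∈ ℤ of the number of edges ij with φ(i) ≤ x < φ(j). -/
open scoped ENNReal

/-- The cutwidth of a graph: the minimum over injective layouts `φ : V ↪ ℤ` of the
maximum number of edges crossing a point `x ∈ ℤ`. -/
noncomputable def cutwidth {V : Type} (G : SimpleGraph V) : ℕ∞ :=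
  ⨅ φ : V ↪ ℤ, ⨆ x : ℤ,
    ({p : V × V | G.Adj p.1 p.2 ∧ φ p.1 ≤ x ∧ x < φ p.2}.ncard : ℕ∞)

/-! ### Auxiliary lemmas about the path graph -/

open SimpleGraph in
/-- Any walk in the path graph from the left of `u` to the right of `v = u + 1`
passes through the edge `s(u, v)`. -/
lemma pathGraph_walk_edge {n : ℕ} {u v : Fin n} (huv : (u : ℕ) + 1 = (v : ℕ)) :
    ∀ {a b : Fin n} (p : (pathGraph n).Walk a b),
      (a : ℕ) ≤ (u : ℕ) → (v : ℕ) ≤ (b : ℕ) → s(u, v) ∈ p.edges := by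
  intro a b p
  induction p with
  | nil => intro ha hb; exfalso; omega
  | @cons a c b h q ih =>
    intro ha hb
    rw [pathGraph_adj] at h
    rw [Walk.edges_cons, List.mem_cons]
    by_cases hc : (c : ℕ) ≤ (u : ℕ)
    · exact Or.inr (ih hc hb)
    · left
      have ha' : a = u := Fin.ext (by omega)
      have hc' : c = v := Fin.ext (by omega)
      rw [ha', hc']

open SimpleGraph in
/-- The path graph is acyclic. -/
lemma pathGraph_isAcyclic (n : ℕ) : (pathGraph n).IsAcyclic := by
  rw [isAcyclic_iff_forall_adj_isBridge]
  intro a b hab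
  rw [isBridge_iff_adj_and_forall_walk_mem_edges]
  refine fun p => ?_
  rw [pathGraph_adj] at hab
  rcases hab with h | h
  · exact pathGraph_walk_edge h p le_rfl le_rfl
  · have := pathGraph_walk_edge h p.reverse le_rfl le_rfl
    rw [Walk.edges_reverse, List.mem_reverse] at this
    rwa [Sym2.eq_swap]

open SimpleGraph in
/-- An "upwards interval" of the path graph induces a connected subgraph. -/
lemma induce_pathGraph_connected {n : ℕ} (S : Set (Fin n)) (i0 : Fin n) (hi0 : i0 ∈ S)
    (hS : ∀ j k : Fin n, i0 ≤ j → j ≤ k → k ∈ S → j ∈ S)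
    (hlb : ∀ j ∈ S, i0 ≤ j) :
    ((pathGraph n).induce S).Connected := by
  rw [connected_iff]
  refine ⟨?_, ⟨⟨i0, hi0⟩⟩⟩
  have key : ∀ d : ℕ, ∀ j, ∀ hj : j ∈ S, (j : ℕ) = (i0 : ℕ) + d →
      ((pathGraph n).induce S).Reachable ⟨i0, hi0⟩ ⟨j, hj⟩ := by
    intro d
    induction d with
    | zero =>
      intro j hj h
      have : j = i0 := Fin.ext (by omega)
      subst this
      exact Reachable.refl _
    | succ d ih =>
      intro j hj h
      have hd : (i0 : ℕ) + d < n := by omega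
      have hj' : (⟨(i0 : ℕ) + d, hd⟩ : Fin n) ∈ S := by
        refine hS _ j (by simp [Fin.le_def]) (by rw [Fin.le_def]; simp; omega) hj
      refine (ih _ hj' rfl).trans (Adj.reachable ?_)
      show (pathGraph n).Adj _ _
      rw [pathGraph_adj]
      left
      simp
      omega
  intro a b
  obtain ⟨j, hj⟩ := a
  obtain ⟨k, hk⟩ := b
  have h1 : i0 ≤ j := hlb j hj
  have h2 : i0 ≤ k := hlb k hk
  rw [Fin.le_def] at h1 h2
  exact ((key ((j : ℕ) - (i0 : ℕ)) j hj (by omega)).symm.trans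
    (key ((k : ℕ) - (i0 : ℕ)) k hk (by omega)))

/-! ### Bags of the path decomposition induced by a layout -/

/-- The bag associated to a cut value `x`: all vertices at position `x`, together with
left endpoints of edges crossing just below `x`. -/
noncomputable def layoutBag {V : Type} [Fintype V] (G : SimpleGraph V) (φ : V ↪ ℤ) (x : ℤ) :
    Finset V := by
  classical exact Finset.univ.filter (fun u => φ u = x ∨ ∃ w, G.Adj u w ∧ φ u < x ∧ x ≤ φ w)

lemma mem_layoutBag {V : Type} [Fintype V] {G : SimpleGraph V} {φ : V ↪ ℤ} {x : ℤ} {u : V} :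
    u ∈ layoutBag G φ x ↔ φ u = x ∨ ∃ w, G.Adj u w ∧ φ u < x ∧ x ≤ φ w := by
  simp [layoutBag]

lemma layoutBag_card_le {V : Type} [Fintype V] (G : SimpleGraph V) (φ : V ↪ ℤ) (x : ℤ) :
    ((layoutBag G φ x).card : ℕ∞) - 1 ≤
      ⨆ y : ℤ, (({p : V × V | G.Adj p.1 p.2 ∧ φ p.1 ≤ y ∧ y < φ p.2}.ncard : ℕ∞)) := by
  classical
  refine le_trans ?_ (le_iSup _ (x - 1))
  set C : Set (V × V) := {p : V × V | G.Adj p.1 p.2 ∧ φ p.1 ≤ x - 1 ∧ x - 1 < φ p.2} with hC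
  have hcard : (layoutBag G φ x).card ≤ C.ncard + 1 := by
    have hsub : layoutBag G φ x ⊆
        (Finset.univ.filter fun u => ∃ w, G.Adj u w ∧ φ u < x ∧ x ≤ φ w) ∪
          (Finset.univ.filter fun u : V => φ u = x) := by
      intro u hu
      rw [mem_layoutBag] at hu
      rcases hu with h | h
      · exact Finset.mem_union_right _ (by simp [h])
      · exact Finset.mem_union_left _ (by simp [h])
    refine le_trans (Finset.card_le_card hsub) (le_trans (Finset.card_union_le _ _) ?_)
    have h1 : (Finset.univ.filter fun u : V => φ u = x).card ≤ 1 := by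
      rw [Finset.card_le_one]
      intro a ha b hb
      simp only [Finset.mem_filter] at ha hb
      exact φ.injective (ha.2.trans hb.2.symm)
    have h2 : (Finset.univ.filter fun u => ∃ w, G.Adj u w ∧ φ u < x ∧ x ≤ φ w).card ≤
        C.ncard := by
      have hCfin : C.Finite := Set.toFinite _
      rw [Set.ncard_eq_toFinset_card C hCfin]
      refine Finset.card_le_card_of_injOn
        (fun u => (u, if h : ∃ w, G.Adj u w ∧ φ u < x ∧ x ≤ φ w then h.choose else u)) ?_ ?_
      · intro a ha
        simp only [Finset.coe_filter, Finset.mem_univ, true_and, Set.mem_setOf_eq] at ha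
        simp only [dif_pos ha]
        have hspec := ha.choose_spec
        rw [Finset.mem_coe, Set.Finite.mem_toFinset]
        show G.Adj a ha.choose ∧ φ a ≤ x - 1 ∧ x - 1 < φ ha.choose
        exact ⟨hspec.1, by omega, by omega⟩
      · intro a _ b _ hab
        exact congrArg Prod.fst hab
    omega
  rw [tsub_le_iff_right]
  calc ((layoutBag G φ x).card : ℕ∞) ≤ ((C.ncard + 1 : ℕ) : ℕ∞) := Nat.cast_le.mpr hcard
    _ = (C.ncard : ℕ∞) + 1 := by push_cast; ring

/-- Treewidth is at most cutwidth. -/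
theorem treewidth_le_cutwidth {V : Type} [Fintype V] (G : SimpleGraph V) :
    treewidth G ≤ cutwidth G := by
  classical
  unfold cutwidth
  refine le_iInf fun φ => ?_
  rcases isEmpty_or_nonempty V with hV | hV
  · -- empty vertex set: a single empty bag
    refine le_trans (iInf_le _
      ⟨Unit, ⊥, ⟨⟨fun u v => SimpleGraph.Reachable.refl u⟩, SimpleGraph.isAcyclic_bot⟩,
        fun _ => (∅ : Finset V), fun v => isEmptyElim v, fun u _ _ => isEmptyElim u,
        fun v => isEmptyElim v⟩) ?_
    refine le_trans ?_ zero_le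
    simp only [TreeDecomp.width, Finset.card_empty, Nat.cast_zero, zero_tsub, ciSup_const, le_refl]
  · -- nonempty vertex set: path decomposition along the layout φ
    letI : LinearOrder V := LinearOrder.lift' φ φ.injective
    have hcard : 0 < Fintype.card V := Fintype.card_pos
    haveI : Nonempty (Fin (Fintype.card V)) := ⟨⟨0, hcard⟩⟩
    let e : Fin (Fintype.card V) ≃o V := monoEquivOfFin V rfl
    have hmono : ∀ i j : Fin (Fintype.card V), i ≤ j → φ (e i) ≤ φ (e j) :=
      fun i j h => e.monotone h
    have hrev : ∀ i j : Fin (Fintype.card V), φ (e i) ≤ φ (e j) → i ≤ j :=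
      fun i j h => e.le_iff_le.mp h
    have claim : ∀ u w : V, G.Adj u w → φ u < φ w →
        u ∈ layoutBag G φ (φ w) ∧ w ∈ layoutBag G φ (φ w) := fun u w h hlt =>
      ⟨mem_layoutBag.mpr (Or.inr ⟨w, h, hlt, le_rfl⟩), mem_layoutBag.mpr (Or.inl rfl)⟩
    refine le_trans (iInf_le _
      ⟨Fin (Fintype.card V), SimpleGraph.pathGraph _,
        ⟨⟨SimpleGraph.pathGraph_preconnected _⟩, pathGraph_isAcyclic _⟩,
        fun i => layoutBag G φ (φ (e i)), ?mem, ?adj, ?conn⟩) ?wid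
    case mem =>
      intro v
      refine ⟨e.symm v, ?_⟩
      show v ∈ layoutBag G φ (φ (e (e.symm v)))
      rw [e.apply_symm_apply]
      exact mem_layoutBag.mpr (Or.inl rfl)
    case adj =>
      -- adj_bag
      intro u w h
      rcases lt_trichotomy (φ u) (φ w) with hlt | heq | hgt
      · refine ⟨e.symm w, ?_⟩
        show u ∈ layoutBag G φ (φ (e (e.symm w))) ∧ w ∈ layoutBag G φ (φ (e (e.symm w)))
        rw [e.apply_symm_apply]
        exact claim u w h hlt
      · exact absurd (φ.injective heq) h.ne
      · refine ⟨e.symm u, ?_⟩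
        show u ∈ layoutBag G φ (φ (e (e.symm u))) ∧ w ∈ layoutBag G φ (φ (e (e.symm u)))
        rw [e.apply_symm_apply]
        exact (claim w u h.symm hgt).symm
    case conn =>
      -- connectivity of the bags containing a fixed vertex
      intro v
      have hv : v ∈ layoutBag G φ (φ (e (e.symm v))) := by
        rw [e.apply_symm_apply]; exact mem_layoutBag.mpr (Or.inl rfl)
      refine induce_pathGraph_connected {i | v ∈ layoutBag G φ (φ (e i))}
        (e.symm v) hv ?_ ?_
      · intro j k hj hk hkS
        by_cases hji : j = e.symm v
        · rw [hji]; exact hv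
        · have hij : e.symm v < j := lt_of_le_of_ne hj (Ne.symm hji)
          have h1 : φ (e (e.symm v)) ≤ φ (e j) := hmono _ _ hj
          have h2 : φ (e (e.symm v)) ≠ φ (e j) :=
            fun hh => hji (e.injective (φ.injective hh)).symm
          have hvj : φ v < φ (e j) := by
            rw [e.apply_symm_apply] at h1 h2; omega
          rcases mem_layoutBag.mp hkS with hcase | ⟨w, hw, hlt, hle⟩
          · -- v is the vertex at position k, so k = e.symm v and hence j = e.symm v
            have : k = e.symm v := by
              have : e k = v := φ.injective hcase.symm
              rw [← this, e.symm_apply_apply]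
            exfalso
            exact hji (le_antisymm (this ▸ hk) hj)
          · exact mem_layoutBag.mpr (Or.inr ⟨w, hw, hvj, le_trans (hmono _ _ hk) hle⟩)
      · intro j hjS
        rcases mem_layoutBag.mp hjS with hcase | ⟨w, hw, hlt, hle⟩
        · have : e j = v := φ.injective hcase.symm
          rw [← this, e.symm_apply_apply]
        · refine hrev _ _ ?_
          rw [e.apply_symm_apply]
          exact le_of_lt hlt
    case wid =>
      -- width bound
      refine iSup_le fun i => ?_
      exact layoutBag_card_le G φ (φ (e i))
end

section
/- Let n ≥ 1, 0 < q ≤ 1, and let b ≥ 1 be an integer, ℓ = λ·(b + q/(1-q) + log((1-q)/(1-q^b))/log q) for real λ ≥ 1. Let X = ∑_{i=1}^b X_i where X_i are independent geometric random variables with success probabilities p_i = 1 - q^i. Then P(X ≥ ℓ) ≤ ((1-q)q^b/(1-q^b))^{λ - 1 - log λ}. -/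
open MeasureTheory ProbabilityTheory Finset ENNReal

/-- Convexity of `exp`: `q ^ x ≤ 1 - x * (1 - q)` for `x ∈ [0,1]`. -/
lemma sft_rpow_le {q x : ℝ} (hq0 : 0 < q) (hx0 : 0 ≤ x) (hx1 : x ≤ 1) :
    q ^ x ≤ 1 - x * (1 - q) := by
  have h := convexOn_exp.2 (Set.mem_univ (Real.log q)) (Set.mem_univ 0) hx0
    (by linarith : (0:ℝ) ≤ 1 - x) (by ring)
  simp only [smul_eq_mul, mul_zero, add_zero, Real.exp_zero, Real.exp_log hq0] at h
  rw [Real.rpow_def_of_pos hq0, mul_comm]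
  nlinarith [h]

/-- Key single-step inequality: `1 - q^(1-s) * y ≥ (1-y)^s * (1-q*y)^(1-s)`. -/
lemma sft_step {q s y : ℝ} (hq0 : 0 < q) (hq1 : q < 1) (hs0 : 0 ≤ s) (hs1 : s ≤ 1)
    (hy0 : 0 ≤ y) (hy1 : y ≤ 1) :
    (1 - y) ^ s * (1 - q * y) ^ (1 - s) ≤ 1 - q ^ (1 - s) * y := by
  have h1 : q ^ (1 - s) ≤ 1 - (1 - s) * (1 - q) :=
    sft_rpow_le hq0 (by linarith) (by linarith)
  have h2 : (1 - y) ^ s * (1 - q * y) ^ (1 - s) ≤ s * (1 - y) + (1 - s) * (1 - q * y) :=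
    Real.geom_mean_le_arith_mean2_weighted hs0 (by linarith) (by linarith)
      (by nlinarith) (by ring)
  nlinarith [mul_le_mul_of_nonneg_right h1 hy0]

/-- Log version of the step inequality. -/
lemma sft_step_log {q s y : ℝ} (hq0 : 0 < q) (hq1 : q < 1) (hs0 : 0 ≤ s) (hs1 : s ≤ 1)
    (hy0 : 0 ≤ y) (hy1 : y < 1) :
    s * Real.log (1 - y) + (1 - s) * Real.log (1 - q * y)
      ≤ Real.log (1 - q ^ (1 - s) * y) := by
  have hy' : 0 < 1 - y := by linarith
  have hqy : 0 < 1 - q * y := by nlinarith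
  have hpos : 0 < (1 - y) ^ s * (1 - q * y) ^ (1 - s) := by positivity
  have h := sft_step hq0 hq1 hs0 hs1 hy0 (le_of_lt hy1)
  have := Real.log_le_log hpos h
  rwa [Real.log_mul (by positivity) (by positivity), Real.log_rpow hy',
    Real.log_rpow hqy] at this

/-- Telescoping sum bound. -/
lemma sft_sum {q s u : ℝ} (hq0 : 0 < q) (hq1 : q < 1) (hs0 : 0 ≤ s) (hs1 : s ≤ 1)
    (hu : u = q ^ (1 - s)) :
    ∀ b : ℕ, 1 ≤ b →
      ∑ i ∈ Icc 1 b, (Real.log (1 - q ^ i) - Real.log (1 - q ^ (i - 1) * u))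
        ≤ Real.log (1 - q) - Real.log (1 - u)
          + s * (Real.log (1 - q ^ b) - Real.log (1 - q)) := by
  intro b hb
  induction b, hb using Nat.le_induction with
  | base => simp
  | succ b hb ih =>
    rw [Finset.sum_Icc_succ_top (by omega)]
    have hy1 : q ^ b < 1 := pow_lt_one₀ (le_of_lt hq0) hq1 (by omega)
    have hstep := sft_step_log hq0 hq1 hs0 hs1 (by positivity : (0:ℝ) ≤ q ^ b) hy1
    rw [← hu] at hstep
    have hq1' : q * q ^ b = q ^ (b + 1) := by rw [pow_succ]; ring
    rw [hq1'] at hstep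
    have hsub : (b + 1 - 1 : ℕ) = b := by omega
    rw [hsub]
    rw [mul_comm u (q ^ b)] at hstep
    linarith [hstep]

lemma sft_keyC {q lam : ℝ} (hq0 : 0 < q) (hq1 : q < 1) (hlam : 1 ≤ lam) :
    Real.log (1 - q) - Real.log (1 - q ^ (lam⁻¹ : ℝ)) ≤
      (Real.log lam - 1 + lam⁻¹) * (-Real.log q)
        + (lam - 1) * (q * (-Real.log q) / (1 - q)) := by
  set L : ℝ := -Real.log q with hL
  set c : ℝ := q * L / (1 - q) with hc
  have hLpos : 0 < L := by
    have := Real.log_neg hq0 hq1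
    simp only [hL]; linarith
  have hq' : 0 < 1 - q := by linarith
  set g : ℝ → ℝ := fun x => (x - 1) * c + (Real.log x - 1 + x⁻¹) * L
    + Real.log (1 - q ^ (x⁻¹ : ℝ)) with hg
  -- facts about E = q ^ x⁻¹ for x ≥ 1
  have hEfact : ∀ x : ℝ, 1 ≤ x → 0 < q ^ (x⁻¹ : ℝ) ∧ q ^ (x⁻¹ : ℝ) < 1 ∧
      q ^ (x⁻¹ : ℝ) ≤ 1 - x⁻¹ * (1 - q) := by
    intro x hx
    have hx0 : 0 < x := lt_of_lt_of_le one_pos hx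
    have hv0 : 0 < x⁻¹ := by positivity
    have hv1 : x⁻¹ ≤ 1 := by
      rw [inv_le_one_iff₀]; right; exact hx
    exact ⟨Real.rpow_pos_of_pos hq0 _,
      Real.rpow_lt_one (le_of_lt hq0) hq1 hv0,
      sft_rpow_le hq0 (le_of_lt hv0) hv1⟩
  -- derivative
  have hd : ∀ x : ℝ, 1 ≤ x → HasDerivAt g
      (1 * c + (x⁻¹ + -(x ^ 2)⁻¹) * L
        + (0 - q ^ (x⁻¹ : ℝ) * Real.log q * -(x ^ 2)⁻¹) / (1 - q ^ (x⁻¹ : ℝ))) x := by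
    intro x hx
    have hx0 : 0 < x := lt_of_lt_of_le one_pos hx
    obtain ⟨hE0, hE1, _⟩ := hEfact x hx
    have hinv : HasDerivAt (fun y : ℝ => y⁻¹) (-(x ^ 2)⁻¹) x := hasDerivAt_inv hx0.ne'
    have hrpow : HasDerivAt (fun y : ℝ => q ^ (y⁻¹ : ℝ))
        (q ^ (x⁻¹ : ℝ) * Real.log q * -(x ^ 2)⁻¹) x := by
      have := ((Real.hasStrictDerivAt_const_rpow hq0 (x⁻¹)).hasDerivAt.comp x hinv)
      exact this
    have hsub : HasDerivAt (fun y : ℝ => 1 - q ^ (y⁻¹ : ℝ))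
        (0 - q ^ (x⁻¹ : ℝ) * Real.log q * -(x ^ 2)⁻¹) x :=
      (hasDerivAt_const x (1:ℝ)).sub hrpow
    have hlog2 := hsub.log (by linarith : (1:ℝ) - q ^ (x⁻¹ : ℝ) ≠ 0)
    have h1 : HasDerivAt (fun y : ℝ => (y - 1) * c) (1 * c) x :=
      ((hasDerivAt_id x).sub_const 1).mul_const c
    have h2 : HasDerivAt (fun y : ℝ => (Real.log y - 1 + y⁻¹) * L)
        ((x⁻¹ + -(x ^ 2)⁻¹) * L) x :=
      (((Real.hasDerivAt_log hx0.ne').sub_const 1).add hinv).mul_const L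
    exact (h1.add h2).add hlog2
  -- derivative nonneg on the interior
  have hnonneg : ∀ x : ℝ, 1 ≤ x →
      0 ≤ 1 * c + (x⁻¹ + -(x ^ 2)⁻¹) * L
        + (0 - q ^ (x⁻¹ : ℝ) * Real.log q * -(x ^ 2)⁻¹) / (1 - q ^ (x⁻¹ : ℝ)) := by
    intro x hx
    have hx0 : 0 < x := lt_of_lt_of_le one_pos hx
    obtain ⟨hE0, hE1, hEb⟩ := hEfact x hx
    set E : ℝ := q ^ (x⁻¹ : ℝ)
    set v : ℝ := x⁻¹ with hv
    have hv0 : 0 < v := by positivity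
    have hv1 : v ≤ 1 := by rw [hv, inv_le_one_iff₀]; right; exact hx
    have hvx : v * x = 1 := inv_mul_cancel₀ hx0.ne'
    have hx2 : (x ^ 2)⁻¹ = v * v := by rw [hv]; field_simp
    have h1E : 0 < 1 - E := by linarith
    have hlogq : Real.log q = -L := by rw [hL]; ring
    rw [hx2, hlogq]
    have key : E * L * (v * v) / (1 - E) ≤ L * v / (1 - q) - L * (v * v) := by
      rw [div_le_iff₀ h1E]
      have e1 : L * v / (1 - q) = L * v * (1 - q)⁻¹ := by ring
      have e2 : (1 - q)⁻¹ * (1 - q) = 1 := inv_mul_cancel₀ hq'.ne'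
      -- (L v (1-q)⁻¹ - L v²)(1-E) ≥ (Lv(1-q)⁻¹ - Lv²) * v(1-q) = Lv²(1 - v(1-q)) ≥ Lv² E
      have h3 : 0 ≤ L * v / (1 - q) - L * (v * v) := by
        rw [e1]
        have h4' : v * (1 - q) ≤ 1 := by nlinarith
        have h4 : v ≤ (1 - q)⁻¹ := by
          have := mul_le_mul_of_nonneg_right h4' (inv_nonneg.2 hq'.le)
          rw [mul_assoc, mul_comm (1-q) (1-q)⁻¹, e2, mul_one, one_mul] at this
          exact this
        nlinarith [mul_le_mul_of_nonneg_left h4 (le_of_lt (mul_pos hLpos hv0))]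
      have h5 : v * (1 - q) ≤ 1 - E := by nlinarith
      have h6 : (L * v / (1 - q) - L * (v * v)) * (v * (1 - q)) = L * (v*v) * (1 - v * (1-q)) := by
        field_simp
      nlinarith [mul_le_mul_of_nonneg_left h5 h3,
        mul_le_mul_of_nonneg_left hEb (le_of_lt (by positivity : (0:ℝ) < L * (v*v)))]
    have hterm : (0 - E * -L * -(v * v)) / (1 - E) = -(E * L * (v * v) / (1 - E)) := by ring
    rw [hterm]
    -- goal: 0 ≤ c + (v + -(v*v)) * L - E L v² / (1-E)
    have hfin : 0 ≤ c + (v + -(v * v)) * L - (L * v / (1 - q) - L * (v * v)) := by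
      have heq : c + (v + -(v*v)) * L - (L * v / (1 - q) - L * (v*v)) = L * q * (1 - v) / (1 - q) := by
        rw [hc]; field_simp; ring
      rw [heq]
      exact div_nonneg (mul_nonneg (mul_nonneg hLpos.le hq0.le) (by linarith)) (by linarith)
    linarith [key, hfin]
  -- monotone
  have hmono : MonotoneOn g (Set.Ici 1) := by
    refine monotoneOn_of_deriv_nonneg (convex_Ici 1) ?_ ?_ ?_
    · intro x hx
      exact ((hd x hx).differentiableAt).continuousAt.continuousWithinAt
    · intro x hx
      rw [interior_Ici] at hx
      exact ((hd x (le_of_lt hx)).differentiableAt).differentiableWithinAt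
    · intro x hx
      rw [interior_Ici] at hx
      rw [(hd x (le_of_lt hx)).deriv]
      exact hnonneg x (le_of_lt hx)
  have h := hmono (Set.mem_Ici.2 (le_refl 1)) (Set.mem_Ici.2 hlam) hlam
  simp only [hg] at h
  rw [inv_one, Real.rpow_one, Real.log_one] at h
  have hrw : ((1:ℝ) - 1) * c + (0 - 1 + 1) * L = 0 := by ring
  -- h : (1-1)*c + (0-1+1)*L + log(1-q) ≤ (lam-1)*c + (log lam -1+lam⁻¹)*L + log(1-q^lam⁻¹)
  ring_nf at h ⊢
  linarith [h]

set_option maxHeartbeats 1000000 in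
lemma sft_main_real {q : ℝ} (hq0 : 0 < q) (hq1 : q < 1) {b : ℕ} (hb : 1 ≤ b)
    {lam ℓ : ℝ} (hlam : 1 ≤ lam)
    (hℓ : ℓ = lam * (b + q / (1 - q) + Real.log ((1 - q) / (1 - q ^ b)) / Real.log q)) :
    ∏ i ∈ Icc 1 b,
        ((1 - q ^ i) * (q ^ (lam⁻¹ : ℝ) / q) / (1 - q ^ (i - 1) * q ^ (lam⁻¹ : ℝ)))
      ≤ ((1 - q) * q ^ b / (1 - q ^ b)) ^ (lam - 1 - Real.log lam)
        * (q ^ (lam⁻¹ : ℝ) / q) ^ ℓ := by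
  have hlam0 : 0 < lam := lt_of_lt_of_le one_pos hlam
  have hinv0 : 0 < lam⁻¹ := by positivity
  have hinv1 : lam⁻¹ ≤ 1 := by
    rw [inv_le_one_iff₀]; right; exact hlam
  set u : ℝ := q ^ (lam⁻¹ : ℝ) with hudef
  set t : ℝ := u / q with htdef
  have hu0 : 0 < u := Real.rpow_pos_of_pos hq0 _
  have hu1 : u < 1 := Real.rpow_lt_one hq0.le hq1 hinv0
  have hqu : q ≤ u := by
    have := Real.rpow_le_rpow_of_exponent_ge hq0 hq1.le hinv1
    rwa [Real.rpow_one] at this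
  have ht1 : (1:ℝ) ≤ t := (one_le_div hq0).2 hqu
  have ht0 : 0 < t := lt_of_lt_of_le one_pos ht1
  have hq' : 0 < 1 - q := by linarith
  set L : ℝ := -Real.log q with hL
  have hLpos : 0 < L := by
    have := Real.log_neg hq0 hq1
    rw [hL]; linarith
  set s : ℝ := 1 - lam⁻¹ with hs
  have hs0 : 0 ≤ s := by rw [hs]; linarith
  have hs1 : s ≤ 1 := by rw [hs]; linarith
  have hqb1 : q ^ b < 1 := pow_lt_one₀ hq0.le hq1 (by omega)
  have hqb0 : 0 < q ^ b := by positivity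
  have hqbq : q ^ b ≤ q := by
    calc q ^ b ≤ q ^ 1 := pow_le_pow_of_le_one hq0.le hq1.le hb
    _ = q := pow_one q
  -- positivity of factors
  have hfac : ∀ i ∈ Icc 1 b, 0 < (1 - q ^ i) * t / (1 - q ^ (i - 1) * u) := by
    intro i hi
    have hi1 : 1 ≤ i := (Finset.mem_Icc.1 hi).1
    have h1 : q ^ i < 1 := pow_lt_one₀ hq0.le hq1 (by omega)
    have h2 : q ^ (i - 1) * u < 1 := by
      have : q ^ (i-1) ≤ 1 := pow_le_one₀ hq0.le hq1.le
      nlinarith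
    have h2' : 0 < 1 - q ^ (i - 1) * u := by linarith
    exact div_pos (mul_pos (by linarith) ht0) h2'
  have hprodpos : 0 < ∏ i ∈ Icc 1 b, ((1 - q ^ i) * t / (1 - q ^ (i - 1) * u)) :=
    Finset.prod_pos hfac
  set r : ℝ := (1 - q) * q ^ b / (1 - q ^ b) with hr
  have hr0 : 0 < r := by
    rw [hr]; exact div_pos (mul_pos hq' hqb0) (by linarith)
  have hrhs0 : 0 < r ^ (lam - 1 - Real.log lam) * t ^ ℓ := by positivity
  rw [← Real.log_le_log_iff hprodpos hrhs0]
  -- compute log of LHS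
  rw [Real.log_prod (fun i hi => (hfac i hi).ne')]
  have hlogfac : ∀ i ∈ Icc 1 b, Real.log ((1 - q ^ i) * t / (1 - q ^ (i - 1) * u))
      = (Real.log (1 - q ^ i) - Real.log (1 - q ^ (i - 1) * u)) + Real.log t := by
    intro i hi
    have hi1 : 1 ≤ i := (Finset.mem_Icc.1 hi).1
    have h1 : q ^ i < 1 := pow_lt_one₀ hq0.le hq1 (by omega)
    have h2 : q ^ (i - 1) * u < 1 := by
      have : q ^ (i-1) ≤ 1 := pow_le_one₀ hq0.le hq1.le
      nlinarith
    rw [Real.log_div (mul_pos (by linarith) ht0).ne' (by linarith), Real.log_mul (by linarith) ht0.ne']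
    ring
  rw [Finset.sum_congr rfl hlogfac, Finset.sum_add_distrib, Finset.sum_const,
    Nat.card_Icc, nsmul_eq_mul]
  have hcard : ((b + 1 - 1 : ℕ) : ℝ) = (b : ℝ) := by norm_num
  rw [hcard]
  -- log t = s * L
  have hlogt : Real.log t = s * L := by
    rw [htdef, Real.log_div hu0.ne' hq0.ne', hudef, Real.log_rpow hq0, hs, hL]; ring
  -- log r = -(b*L + G)
  set G : ℝ := Real.log (1 - q ^ b) - Real.log (1 - q) with hG
  have hG0 : 0 ≤ G := by
    rw [hG]
    have := Real.log_le_log hq' (by linarith : 1 - q ≤ 1 - q ^ b)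
    linarith
  have hlogr : Real.log r = -((b:ℝ) * L + G) := by
    rw [hr, Real.log_div (by positivity) (by linarith), Real.log_mul hq'.ne' hqb0.ne',
      Real.log_pow, hG, hL]
    push_cast
    ring
  -- ℓ * log t = (lam - 1) * ((b*L + G) + q*L/(1-q))
  have hlogq_ne : Real.log q ≠ 0 := by
    rw [show Real.log q = -L by rw [hL]; ring]
    exact neg_ne_zero.2 hLpos.ne'
  have hellt : ℓ * Real.log t = (lam - 1) * (((b:ℝ) * L + G) + q * L / (1 - q)) := by
    have hlq : Real.log q = -L := by rw [hL]; ring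
    have hdivG : Real.log ((1 - q) / (1 - q ^ b)) / Real.log q = G / L := by
      rw [Real.log_div hq'.ne' (by linarith : (1:ℝ) - q ^ b ≠ 0), hlq,
        show Real.log (1 - q) - Real.log (1 - q ^ b) = -G by rw [hG]; ring,
        neg_div_neg_eq]
    rw [hℓ, hlogt, hdivG]
    have h1 : lam * s = lam - 1 := by
      rw [hs, mul_sub, mul_inv_cancel₀ hlam0.ne', mul_one]
    have hGL : G / L * L = G := div_mul_cancel₀ G hLpos.ne'
    linear_combination (((b:ℝ) + q / (1 - q)) * L + G / L * L) * h1 + (lam - 1) * hGL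
  -- sum bound
  have hsum := sft_sum hq0 hq1 hs0 hs1
    (by rw [hudef, hs]; norm_num : u = q ^ (1 - s)) b hb
  -- key C
  have hkey := sft_keyC hq0 hq1 hlam
  rw [show -Real.log q = L by rw [hL]] at hkey
  rw [← hudef] at hkey
  -- coefficient nonneg
  have hcoef : 0 ≤ Real.log lam - 1 + lam⁻¹ := by
    have h1 := Real.log_le_sub_one_of_pos hinv0
    rw [Real.log_inv] at h1
    linarith
  -- R ≥ L
  have hRL : L ≤ (b:ℝ) * L + G := by
    have hb1 : (1:ℝ) ≤ (b:ℝ) := by exact_mod_cast hb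
    nlinarith [mul_le_mul_of_nonneg_right hb1 hLpos.le]
  -- final
  rw [Real.log_mul (by positivity) (by positivity), Real.log_rpow hr0, Real.log_rpow ht0,
    hlogr, hellt, hlogt]
  clear_value u t L s G r
  have hmul := mul_le_mul_of_nonneg_left hRL hcoef
  have hGsum : Real.log (1 - q ^ b) - Real.log (1 - q) = G := by rw [hG]
  rw [hGsum] at hsum
  have e2 : (Real.log lam - 1 + lam⁻¹) * ((b:ℝ) * L + G) + (lam - 1) * (q * L / (1 - q))
      + s * G + (b:ℝ) * (s * L)
      = (lam - 1 - Real.log lam) * -((b:ℝ) * L + G)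
        + (lam - 1) * (((b:ℝ) * L + G) + q * L / (1 - q)) := by
    rw [hs]; ring
  linarith only [hsum, hkey, hmul, e2]

lemma sft_lintegral_prod {Ω : Type*} [MeasurableSpace Ω] (μ : Measure Ω)
    [IsProbabilityMeasure μ] (Y : ℕ → Ω → ℝ≥0∞) (hY : ∀ i, Measurable (Y i))
    (hind : iIndepFun Y μ) (s : Finset ℕ) :
    ∫⁻ ω, ∏ i ∈ s, Y i ω ∂μ = ∏ i ∈ s, ∫⁻ ω, Y i ω ∂μ := by
  classical
  induction s using Finset.induction with
  | empty => simp
  | @insert a s ha ih =>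
    simp only [Finset.prod_insert ha]
    have hprodmeas : Measurable (fun ω => ∏ i ∈ s, Y i ω) :=
      Finset.measurable_prod s (fun i _ => hY i)
    have hindf : IndepFun (Y a) (fun ω => ∏ i ∈ s, Y i ω) μ := by
      have h := (hind.indepFun_finsetProd_of_notMem hY ha).symm
      have heq : (∏ j ∈ s, Y j) = fun ω => ∏ i ∈ s, Y i ω := by
        funext ω; exact Finset.prod_apply ω s Y
      rwa [heq] at h
    have h := lintegral_mul_eq_lintegral_mul_lintegral_of_indepFun (hY a) hprodmeas hindf
    simp only [Pi.mul_apply] at h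
    rw [h, ih]

lemma sft_integral_geom {Ω : Type*} [MeasurableSpace Ω] (μ : Measure Ω)
    [IsProbabilityMeasure μ] {p t : ℝ} (hp0 : 0 < p) (ht0 : 0 < t) (hpt : t * p < 1)
    (Xi : Ω → ℕ) (hm : Measurable Xi)
    (hpmf : ∀ k : ℕ, μ {ω | Xi ω = k}
      = if 1 ≤ k then ENNReal.ofReal (p ^ (k - 1) * (1 - p)) else 0) :
    ∫⁻ ω, (ENNReal.ofReal t) ^ (Xi ω) ∂μ
      = ENNReal.ofReal ((1 - p) * t / (1 - t * p)) := by
  have hTmeas : Measurable (fun k : ℕ => (ENNReal.ofReal t) ^ k) := measurable_from_nat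
  have h1 : ∫⁻ ω, (ENNReal.ofReal t) ^ (Xi ω) ∂μ
      = ∫⁻ k, (ENNReal.ofReal t) ^ k ∂(μ.map Xi) := (lintegral_map hTmeas hm).symm
  rw [h1, lintegral_countable']
  have hmap : ∀ k : ℕ, (μ.map Xi) {k} = μ {ω | Xi ω = k} := by
    intro k
    rw [Measure.map_apply hm (measurableSet_singleton k)]
    rfl
  simp_rw [hmap, hpmf]
  rw [tsum_eq_zero_add' ENNReal.summable]
  have h0 : (ENNReal.ofReal t) ^ (0:ℕ) * (if 1 ≤ (0:ℕ) then
      ENNReal.ofReal (p ^ (0 - 1) * (1 - p)) else 0) = 0 := by simp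
  rw [h0, zero_add]
  have hterm : ∀ k : ℕ, (ENNReal.ofReal t) ^ (k + 1) * (if 1 ≤ k + 1 then
      ENNReal.ofReal (p ^ (k + 1 - 1) * (1 - p)) else 0)
      = (ENNReal.ofReal (t * p)) ^ k * (ENNReal.ofReal t * ENNReal.ofReal (1 - p)) := by
    intro k
    rw [if_pos (by omega)]
    have hsub : k + 1 - 1 = k := by omega
    rw [hsub, ENNReal.ofReal_mul (by positivity), ENNReal.ofReal_pow hp0.le,
      ENNReal.ofReal_mul ht0.le, mul_pow, pow_succ]
    ring
  simp_rw [hterm]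
  rw [ENNReal.tsum_mul_right, ENNReal.tsum_geometric]
  have hsub1 : (1 : ℝ≥0∞) - ENNReal.ofReal (t * p) = ENNReal.ofReal (1 - t * p) := by
    rw [ENNReal.ofReal_sub _ (by positivity), ENNReal.ofReal_one]
  rw [hsub1, ← ENNReal.ofReal_mul ht0.le,
    ENNReal.ofReal_div_of_pos (by linarith : (0:ℝ) < 1 - t * p), div_eq_mul_inv]
  rw [show t * (1 - p) = (1 - p) * t by ring]
  ring


set_option maxHeartbeats 1000000 in
/-- Janson-type tail bound for the waiting time of a sparse flush: a sum of
independent geometric random variables with success probabilities `pᵢ = 1 - qⁱ`. -/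
theorem sparse_flush_tail {Ω : Type*} [MeasurableSpace Ω] (μ : Measure Ω)
    [IsProbabilityMeasure μ] (n : ℕ) (hn : 1 ≤ n)
    (q : ℝ) (hq0 : 0 < q) (hq1 : q < 1) (b : ℕ) (hb : 1 ≤ b)
    (lam : ℝ) (hlam : 1 ≤ lam)
    (ℓ : ℝ)
    (hℓ : ℓ = lam * (b + q / (1 - q) + Real.log ((1 - q) / (1 - q ^ b)) / Real.log q))
    (X : ℕ → Ω → ℕ) (hmeas : ∀ i, Measurable (X i))
    (hindep : iIndepFun X μ)
    (hgeom : ∀ i ∈ Finset.Icc 1 b, ∀ k : ℕ,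
      μ {ω | X i ω = k} =
        if 1 ≤ k then ENNReal.ofReal ((1 - (1 - q ^ i)) ^ (k - 1) * (1 - q ^ i)) else 0) :
    μ {ω | ℓ ≤ ∑ i ∈ Finset.Icc 1 b, (X i ω : ℝ)}
      ≤ ENNReal.ofReal (((1 - q) * q ^ b / (1 - q ^ b)) ^ (lam - 1 - Real.log lam)) := by
  have hq' : 0 < 1 - q := by linarith
  have hlam0 : 0 < lam := lt_of_lt_of_le one_pos hlam
  have hinv0 : 0 < lam⁻¹ := by positivity
  have hinv1 : lam⁻¹ ≤ 1 := by rw [inv_le_one_iff₀]; right; exact hlam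
  set u : ℝ := q ^ (lam⁻¹ : ℝ) with hudef
  set t : ℝ := u / q with htdef
  have hu0 : 0 < u := Real.rpow_pos_of_pos hq0 _
  have hu1 : u < 1 := Real.rpow_lt_one hq0.le hq1 hinv0
  have hqu : q ≤ u := by
    have := Real.rpow_le_rpow_of_exponent_ge hq0 hq1.le hinv1
    rwa [Real.rpow_one] at this
  have ht1 : (1:ℝ) ≤ t := (one_le_div hq0).2 hqu
  have ht0 : 0 < t := lt_of_lt_of_le one_pos ht1
  set T : ℝ≥0∞ := ENNReal.ofReal t with hT
  set Y : ℕ → Ω → ℝ≥0∞ := fun i ω => T ^ (X i ω) with hYdef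
  have hYmeas : ∀ i, Measurable (Y i) :=
    fun i => (measurable_from_nat (f := fun n : ℕ => T ^ n)).comp (hmeas i)
  have hYind : iIndepFun Y μ :=
    hindep.comp (fun _ n => T ^ n) (fun _ => measurable_from_nat)
  set c : ℝ≥0∞ := ENNReal.ofReal (t ^ ℓ) with hc
  have hc0 : c ≠ 0 := (ENNReal.ofReal_pos.2 (Real.rpow_pos_of_pos ht0 ℓ)).ne'
  have hctop : c ≠ ⊤ := ENNReal.ofReal_ne_top
  -- event inclusion
  have hsub : {ω | ℓ ≤ ∑ i ∈ Finset.Icc 1 b, (X i ω : ℝ)}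
      ⊆ {ω | c ≤ ∏ i ∈ Finset.Icc 1 b, Y i ω} := by
    intro ω hω
    simp only [Set.mem_setOf_eq] at hω ⊢
    have hcast : (∑ i ∈ Finset.Icc 1 b, (X i ω : ℝ))
        = ((∑ i ∈ Finset.Icc 1 b, X i ω : ℕ) : ℝ) := by push_cast; ring
    have h1 : t ^ ℓ ≤ t ^ (((∑ i ∈ Finset.Icc 1 b, X i ω : ℕ)) : ℝ) :=
      Real.rpow_le_rpow_of_exponent_le ht1 (by rw [← hcast]; exact hω)
    rw [Real.rpow_natCast] at h1
    calc c ≤ ENNReal.ofReal (t ^ (∑ i ∈ Finset.Icc 1 b, X i ω)) := by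
          rw [hc]; exact ENNReal.ofReal_le_ofReal h1
      _ = T ^ (∑ i ∈ Finset.Icc 1 b, X i ω) := by rw [hT, ENNReal.ofReal_pow ht0.le]
      _ = ∏ i ∈ Finset.Icc 1 b, T ^ (X i ω) := (Finset.prod_pow_eq_pow_sum _ _ _).symm
  -- Markov
  have hmarkov : c * μ {ω | ℓ ≤ ∑ i ∈ Finset.Icc 1 b, (X i ω : ℝ)}
      ≤ ∫⁻ ω, ∏ i ∈ Finset.Icc 1 b, Y i ω ∂μ := by
    calc c * μ {ω | ℓ ≤ ∑ i ∈ Finset.Icc 1 b, (X i ω : ℝ)}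
        ≤ c * μ {ω | c ≤ ∏ i ∈ Finset.Icc 1 b, Y i ω} :=
          mul_le_mul_right (measure_mono hsub) c
      _ ≤ ∫⁻ ω, ∏ i ∈ Finset.Icc 1 b, Y i ω ∂μ :=
          mul_meas_ge_le_lintegral₀
            (Finset.measurable_prod _ (fun i _ => hYmeas i)).aemeasurable c
  rw [sft_lintegral_prod μ Y hYmeas hYind] at hmarkov
  -- per-i integrals
  have htq : ∀ i : ℕ, 1 ≤ i → t * q ^ i = q ^ (i - 1) * u ∧ t * q ^ i < 1 := by
    intro i hi1
    have h2 : q ^ i = q ^ (i - 1) * q := by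
      rw [← pow_succ]; congr 1; omega
    have heq : t * q ^ i = q ^ (i - 1) * u := by
      rw [h2, htdef]; field_simp
    have h3 : q ^ (i - 1) ≤ 1 := pow_le_one₀ hq0.le hq1.le
    constructor
    · exact heq
    · rw [heq]; nlinarith [hu0, hu1]
  have hint : ∀ i ∈ Finset.Icc 1 b,
      ∫⁻ ω, Y i ω ∂μ = ENNReal.ofReal ((1 - q ^ i) * t / (1 - t * q ^ i)) := by
    intro i hi
    have hi1 : 1 ≤ i := (Finset.mem_Icc.1 hi).1
    have hq_i0 : 0 < q ^ i := by positivity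
    have hpmf : ∀ k, μ {ω | X i ω = k}
        = if 1 ≤ k then ENNReal.ofReal ((q ^ i) ^ (k - 1) * (1 - q ^ i)) else 0 := by
      intro k
      rw [hgeom i hi k]
      simp only [show ((1:ℝ) - (1 - q ^ i)) = q ^ i from by ring]
    exact sft_integral_geom μ hq_i0 ht0 (htq i hi1).2 (X i) (hmeas i) hpmf
  rw [Finset.prod_congr rfl hint] at hmarkov
  have hEnn : ∀ i ∈ Finset.Icc 1 b, 0 ≤ (1 - q ^ i) * t / (1 - t * q ^ i) := by
    intro i hi
    have hi1 : 1 ≤ i := (Finset.mem_Icc.1 hi).1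
    have h1 : q ^ i < 1 := pow_lt_one₀ hq0.le hq1 (by omega)
    have h2 := (htq i hi1).2
    have h3 : (0:ℝ) ≤ 1 - t * q ^ i := by linarith
    have h4 : (0:ℝ) ≤ (1 - q ^ i) * t := by nlinarith
    positivity
  rw [← ENNReal.ofReal_prod_of_nonneg hEnn] at hmarkov
  -- rewrite product to match sft_main_real
  have hprodeq : ∏ i ∈ Finset.Icc 1 b, ((1 - q ^ i) * t / (1 - t * q ^ i))
      = ∏ i ∈ Finset.Icc 1 b,
          ((1 - q ^ i) * (q ^ (lam⁻¹ : ℝ) / q) / (1 - q ^ (i - 1) * q ^ (lam⁻¹ : ℝ))) := by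
    refine Finset.prod_congr rfl (fun i hi => ?_)
    have hi1 : 1 ≤ i := (Finset.mem_Icc.1 hi).1
    rw [← hudef, ← htdef, (htq i hi1).1]
  have hmain := sft_main_real hq0 hq1 hb hlam hℓ
  rw [← hudef, ← htdef, ← hprodeq] at hmain
  have hbase : (0:ℝ) ≤ (1 - q) * q ^ b / (1 - q ^ b) := by
    have hqb1 : q ^ b < 1 := pow_lt_one₀ hq0.le hq1 (by omega)
    have h0 : (0:ℝ) < q ^ b := by positivity
    exact le_of_lt (div_pos (mul_pos hq' h0) (by linarith))
  have hfinal : c * μ {ω | ℓ ≤ ∑ i ∈ Finset.Icc 1 b, (X i ω : ℝ)}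
      ≤ ENNReal.ofReal (((1 - q) * q ^ b / (1 - q ^ b)) ^ (lam - 1 - Real.log lam)) * c := by
    calc c * μ {ω | ℓ ≤ ∑ i ∈ Finset.Icc 1 b, (X i ω : ℝ)}
        ≤ ENNReal.ofReal (∏ i ∈ Finset.Icc 1 b, ((1 - q ^ i) * t / (1 - t * q ^ i))) :=
          hmarkov
      _ ≤ ENNReal.ofReal
            (((1 - q) * q ^ b / (1 - q ^ b)) ^ (lam - 1 - Real.log lam) * t ^ ℓ) :=
          ENNReal.ofReal_le_ofReal hmain
      _ = ENNReal.ofReal (((1 - q) * q ^ b / (1 - q ^ b)) ^ (lam - 1 - Real.log lam)) * c := by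
          rw [hc, ENNReal.ofReal_mul (Real.rpow_nonneg hbase _)]
  have hfinal' : μ {ω | ℓ ≤ ∑ i ∈ Finset.Icc 1 b, (X i ω : ℝ)} * c
      ≤ ENNReal.ofReal (((1 - q) * q ^ b / (1 - q ^ b)) ^ (lam - 1 - Real.log lam)) * c := by
    rw [mul_comm (μ _) c]; exact hfinal
  exact (ENNReal.mul_le_mul_iff_left hc0 hctop).1 hfinal'
end

section
/- Let 0 < q < 1 and b ≥ 1 an integer. Then b + log((1-q)/(1-q^b))/log(q) ≤ ∑_{i=1}^b 1/(1-q^i) ≤ b + q/(1-q) + log((1-q)/(1-q^b))/log(q). -/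
open Real Set

private lemma hasDerivAt_F {q : ℝ} (hq0 : 0 < q) (hq1 : q < 1) {x : ℝ} (hx : 0 < x) :
    HasDerivAt (fun y => y - Real.log (1 - q ^ y) / Real.log q) (1 / (1 - q ^ x)) x := by
  have hlt : q ^ x < 1 := Real.rpow_lt_one hq0.le hq1 hx
  have hpos : (0:ℝ) < q ^ x := Real.rpow_pos_of_pos hq0 x
  have hne : 1 - q ^ x ≠ 0 := by linarith
  have hlogq : Real.log q ≠ 0 := (Real.log_neg hq0 hq1).ne
  have h1 : HasDerivAt (fun y => q ^ y) (q ^ x * Real.log q) x :=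
    (Real.hasStrictDerivAt_const_rpow hq0 x).hasDerivAt
  have h2 : HasDerivAt (fun y => 1 - q ^ y) (-(q ^ x * Real.log q)) x := h1.const_sub 1
  have h3 := (h2.log hne).div_const (Real.log q)
  have h4 := (hasDerivAt_id x).sub h3
  convert h4 using 1
  iterate 3 rfl
  field_simp
  ring

private lemma mvt_step {q : ℝ} (hq0 : 0 < q) (hq1 : q < 1) {a : ℝ} (ha : 1 ≤ a) :
    1 / (1 - q ^ (a + 1)) ≤
        (a + 1 - Real.log (1 - q ^ (a + 1)) / Real.log q) -
          (a - Real.log (1 - q ^ a) / Real.log q) ∧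
      (a + 1 - Real.log (1 - q ^ (a + 1)) / Real.log q) -
          (a - Real.log (1 - q ^ a) / Real.log q) ≤ 1 / (1 - q ^ a) := by
  set F : ℝ → ℝ := fun y => y - Real.log (1 - q ^ y) / Real.log q with hF
  have hab : a < a + 1 := by linarith
  have hcont : ContinuousOn F (Icc a (a + 1)) := by
    intro x hx
    exact (hasDerivAt_F hq0 hq1 (by simp only [mem_Icc] at hx; linarith)).continuousAt.continuousWithinAt
  have hderiv : ∀ x ∈ Ioo a (a + 1), HasDerivAt F (1 / (1 - q ^ x)) x := fun x hx =>
    hasDerivAt_F hq0 hq1 (by simp only [mem_Ioo] at hx; linarith)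
  obtain ⟨c, hc, hceq⟩ := exists_hasDerivAt_eq_slope F _ hab hcont hderiv
  simp only [add_sub_cancel_left, div_one] at hceq
  obtain ⟨hc1, hc2⟩ := hc
  have hqc : q ^ (a + 1) < q ^ c := Real.rpow_lt_rpow_of_exponent_gt hq0 hq1 hc2
  have hqa : q ^ c < q ^ a := Real.rpow_lt_rpow_of_exponent_gt hq0 hq1 hc1
  have h1 : q ^ a < 1 := Real.rpow_lt_one hq0.le hq1 (by linarith)
  have hpos : (0:ℝ) < 1 - q ^ a := by linarith
  have hposc : (0:ℝ) < 1 - q ^ c := by linarith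
  constructor
  · rw [← hceq]
    exact one_div_le_one_div_of_le hposc (by linarith)
  · rw [← hceq]
    exact one_div_le_one_div_of_le hpos (by linarith)

theorem sum_inv_one_sub_pow_bounds (q : ℝ) (hq0 : 0 < q) (hq1 : q < 1)
    (b : ℕ) (hb : 1 ≤ b) :
    (b : ℝ) + Real.log ((1 - q) / (1 - q ^ b)) / Real.log q
        ≤ ∑ i ∈ Finset.Icc 1 b, 1 / (1 - q ^ i) ∧
    (∑ i ∈ Finset.Icc 1 b, 1 / (1 - q ^ i))
        ≤ (b : ℝ) + q / (1 - q) + Real.log ((1 - q) / (1 - q ^ b)) / Real.log q := by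
  have hq : (0:ℝ) < 1 - q := by linarith
  have hlogq : Real.log q ≠ 0 := (Real.log_neg hq0 hq1).ne
  have hpow : ∀ n : ℕ, 1 ≤ n → (0:ℝ) < 1 - q ^ n := fun n hn => by
    have : q ^ n < 1 := pow_lt_one₀ hq0.le hq1 (by omega)
    linarith
  -- key step: for n ≥ 1,
  -- 1/(1-q^(n+1)) ≤ 1 + (L (n+1) - L n) ≤ 1/(1-q^n)
  have key : ∀ n : ℕ, 1 ≤ n →
      1 / (1 - q ^ (n + 1)) ≤
        1 + (Real.log ((1 - q) / (1 - q ^ (n + 1))) / Real.log q -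
          Real.log ((1 - q) / (1 - q ^ n)) / Real.log q) ∧
      1 + (Real.log ((1 - q) / (1 - q ^ (n + 1))) / Real.log q -
          Real.log ((1 - q) / (1 - q ^ n)) / Real.log q) ≤ 1 / (1 - q ^ n) := by
    intro n hn
    have ha : (1:ℝ) ≤ (n:ℝ) := by exact_mod_cast hn
    have h := mvt_step hq0 hq1 ha
    rw [show ((n:ℝ) + 1) = ((n + 1 : ℕ) : ℝ) by push_cast; ring] at h
    rw [Real.rpow_natCast, Real.rpow_natCast] at h
    push_cast at h
    have halg : ((n:ℝ) + 1 - Real.log (1 - q ^ (n + 1)) / Real.log q) -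
          ((n:ℝ) - Real.log (1 - q ^ n) / Real.log q) =
        1 + (Real.log ((1 - q) / (1 - q ^ (n + 1))) / Real.log q -
          Real.log ((1 - q) / (1 - q ^ n)) / Real.log q) := by
      rw [Real.log_div hq.ne' (hpow (n + 1) (by omega)).ne',
        Real.log_div hq.ne' (hpow n hn).ne']
      field_simp
      ring
    rw [halg] at h
    exact h
  -- induction: P n ∧ stronger lower bound
  have main : ∀ n : ℕ, 1 ≤ n →
      ((n : ℝ) - 1) + Real.log ((1 - q) / (1 - q ^ n)) / Real.log q + 1 / (1 - q ^ n)
        ≤ ∑ i ∈ Finset.Icc 1 n, 1 / (1 - q ^ i) ∧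
      (∑ i ∈ Finset.Icc 1 n, 1 / (1 - q ^ i))
        ≤ (n : ℝ) + q / (1 - q) + Real.log ((1 - q) / (1 - q ^ n)) / Real.log q := by
    intro n hn
    induction n, hn using Nat.le_induction with
    | base =>
      simp only [Finset.Icc_self, Finset.sum_singleton, pow_one, Nat.cast_one]
      rw [div_self hq.ne', Real.log_one, zero_div]
      constructor
      · linarith
      · rw [show (1:ℝ) + q / (1 - q) + 0 = 1 / (1 - q) by field_simp; ring]
    | succ n hn ih =>
      obtain ⟨ih1, ih2⟩ := ih
      obtain ⟨k1, k2⟩ := key n hn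
      rw [Finset.sum_Icc_succ_top (by omega : 1 ≤ n + 1)]
      push_cast
      constructor
      · linarith
      · linarith
  obtain ⟨h1, h2⟩ := main b hb
  have hone : (1:ℝ) ≤ 1 / (1 - q ^ b) := by
    have hp := hpow b hb
    rw [le_div_iff₀ hp]
    have : (0:ℝ) ≤ q ^ b := by positivity
    linarith
  exact ⟨by linarith, h2⟩
end
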